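/- arXiv:math/0608261 — 8 statements merged into one kernel-verified Lean document; each statement's English description precedes it below -/
import Mathlib

section
/- Let S be the numerical semigroup (additive submonoid of ℕ) generated by integers 0 < a_1 < ⋯ < a_r, and for s ∈ S let λ(s) = min{λ_1 + ⋯ + λ_r : λ_i ∈ ℕ, s = λ_1 a_1 + ⋯ + λ_r a_r}. Then lim_{s→∞} s/λ(s) = a_r along S; that is, for every real ε > 0 there exists N ∈ ℕ such that every s ∈ S with s ≥ N satisfies |s/λ(s) − a_r| < ε. -/
/-!
Write `A = a_r` and take a representation `s = ∑ cᵢ aᵢ` of minimal length `λ(s) = ∑ cᵢ`.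
Since every `aᵢ ≤ A`, `s ≤ λ(s) A`. Conversely, if `cⱼ ≥ A` for some `j < r`, then
trading `A` copies of `aⱼ` for `aⱼ` copies of `A` shortens the representation; hence
`cⱼ < A` for `j < r`, and `λ(s) A ≤ c_r A + r A² ≤ s + r A²`. Together,
`|s / λ(s) - A| ≤ r A³ / s`, which tends to `0`.
-/

/-- `lam a s` is the least total number of generators (counted with multiplicity)
needed to write `s` as an ℕ-linear combination of the `a i`. -/
noncomputable def lam {r : ℕ} (a : Fin r → ℕ) (s : ℕ) : ℕ :=
  sInf {n | ∃ c : Fin r → ℕ, (∑ i, c i) = n ∧ (∑ i, c i * a i) = s}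

section Representations

variable {r : ℕ} {a : Fin r → ℕ} {s : ℕ}

theorem lam_le_sum {c : Fin r → ℕ} (hc : ∑ i, c i * a i = s) : lam a s ≤ ∑ i, c i :=
  Nat.sInf_le ⟨c, rfl, hc⟩

theorem exists_sum_eq_lam (hs : s ∈ AddSubmonoid.closure (Set.range a)) :
    ∃ c : Fin r → ℕ, ∑ i, c i = lam a s ∧ ∑ i, c i * a i = s := by
  obtain ⟨c, rfl⟩ := AddSubmonoid.exists_of_mem_closure_range a _ hs
  exact Nat.sInf_mem (s := {n | ∃ c' : Fin r → ℕ, ∑ i, c' i = n ∧ ∑ i, c' i * a i = _})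
    ⟨∑ i, c i, c, rfl, by simp⟩

theorem coeff_lt_of_sum_eq_lam {c : Fin r → ℕ} (hc : ∑ i, c i = lam a s)
    (hcs : ∑ i, c i * a i = s) {j k : Fin r} (hjk : a j < a k) : c j < a k := by
  by_contra! hle
  obtain ⟨d, rfl⟩ : ∃ d, c = d + Pi.single j (a k) :=
    ⟨c - Pi.single j (a k), by ext i; rcases eq_or_ne i j with rfl | hij <;> simp [*]⟩
  have hsingle (i : Fin r) (m : ℕ) : ∑ l, (Pi.single i m : Fin r → ℕ) l * a l = m * a i := by
    simp [Pi.single_apply]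
  -- trade the `a k` copies of `a j` split off in `c` for `a j` copies of `a k`
  have htrade : lam a s ≤ ∑ i, (d i + (Pi.single k (a j) : Fin r → ℕ) i) :=
    lam_le_sum (by
      simp only [Pi.add_apply, add_mul, Finset.sum_add_distrib, hsingle] at hcs ⊢
      rw [← hcs, mul_comm])
  simp only [Pi.add_apply, Finset.sum_add_distrib, Finset.sum_pi_single', Finset.mem_univ,
    if_true] at hc htrade
  omega

theorem le_lam_mul_of_forall_le {M : ℕ} (haM : ∀ i, a i ≤ M)
    (hs : s ∈ AddSubmonoid.closure (Set.range a)) : s ≤ lam a s * M := by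
  obtain ⟨c, hc, rfl⟩ := exists_sum_eq_lam hs
  calc ∑ i, c i * a i ≤ ∑ i, c i * M := by gcongr with i; exact haM i
    _ = lam a (∑ i, c i * a i) * M := by rw [← Finset.sum_mul, hc]

end Representations

theorem lam_mul_le {r : ℕ} {a : Fin (r + 1) → ℕ} (ha : StrictMono a) {s : ℕ}
    (hs : s ∈ AddSubmonoid.closure (Set.range a)) :
    lam a s * a (Fin.last r) ≤ s + r * a (Fin.last r) ^ 2 := by
  obtain ⟨c, hc, hcs⟩ := exists_sum_eq_lam hs
  set A := a (Fin.last r)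
  have hsmall (i : Fin r) : c i.castSucc < A :=
    coeff_lt_of_sum_eq_lam hc hcs (ha (Fin.castSucc_lt_last i))
  have hlast : c (Fin.last r) * A ≤ s := by
    rw [← hcs, Fin.sum_univ_castSucc]
    exact Nat.le_add_left _ _
  calc lam a s * A = ∑ i : Fin r, c i.castSucc * A + c (Fin.last r) * A := by
        rw [← hc, Finset.sum_mul, Fin.sum_univ_castSucc]
    _ ≤ ∑ _i : Fin r, A * A + s := by
        gcongr with i
        exact (hsmall i).le
    _ = s + r * A ^ 2 := by simp [sq, add_comm]

theorem abs_div_sub_le_of_le {x l A K : ℝ} (hx : 0 < x) (hl : 0 < l) (hK : 0 ≤ K)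
    (hxl : x ≤ l * A) (hlx : l * A ≤ x + K) : |x / l - A| ≤ K * A / x := by
  have hdiff : x / l - A = (x - l * A) / l := by field_simp
  calc |x / l - A| ≤ K / l := by
        rw [hdiff, abs_div, abs_of_pos hl, abs_of_nonpos (by linarith)]
        gcongr
        linarith
    _ ≤ K * A / x := by
        rw [div_le_div_iff₀ hl hx]
        nlinarith

theorem abs_div_lam_sub_le {r : ℕ} {a : Fin (r + 1) → ℕ} (ha : StrictMono a) {s : ℕ}
    (hs : s ∈ AddSubmonoid.closure (Set.range a)) (hs0 : 0 < s) :
    |(s : ℝ) / lam a s - a (Fin.last r)| ≤ r * (a (Fin.last r) : ℝ) ^ 3 / s := by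
  have hub : s ≤ lam a s * a (Fin.last r) :=
    le_lam_mul_of_forall_le (fun i => ha.monotone (Fin.le_last i)) hs
  have hlb := lam_mul_le ha hs
  have hlam : 0 < lam a s := Nat.pos_of_ne_zero (by rintro h; simp [h] at hub; omega)
  have key := abs_div_sub_le_of_le (x := s) (l := lam a s) (A := a (Fin.last r))
    (K := r * (a (Fin.last r) : ℝ) ^ 2) (by exact_mod_cast hs0) (by exact_mod_cast hlam)
    (by positivity) (by exact_mod_cast hub) (by exact_mod_cast hlb)
  simpa [pow_succ, mul_assoc] using key

theorem stmt0_general {r : ℕ} (a : Fin (r + 1) → ℕ) (hmono : StrictMono a) :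
    ∀ ε : ℝ, 0 < ε → ∃ N : ℕ, ∀ s : ℕ,
      s ∈ AddSubmonoid.closure (Set.range a) → N ≤ s →
      |(s : ℝ) / (lam a s : ℝ) - (a (Fin.last r) : ℝ)| < ε := by
  intro ε hε
  set C : ℝ := r * (a (Fin.last r) : ℝ) ^ 3
  refine ⟨⌈C / ε⌉₊ + 1, fun s hs hN => ?_⟩
  have hs0 : (0 : ℝ) < s := by exact_mod_cast (Nat.succ_pos _).trans_le hN
  have hCs : C / ε < s := Nat.lt_of_ceil_lt (Nat.lt_of_succ_le hN)
  calc _ ≤ C / s := abs_div_lam_sub_le hmono hs (by exact_mod_cast hs0)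
    _ < ε := by rwa [div_lt_iff₀ hs0, mul_comm, ← div_lt_iff₀ hε]

/-- for the numerical semigroup `S` generated by
`0 < a_1 < ⋯ < a_r` (here `a 0, …, a (Fin.last r)`), one has
`lim_{s → ∞} s / λ(s) = a_r` along `S`. -/
theorem stmt0 {r : ℕ} (a : Fin (r + 1) → ℕ) (hpos : 0 < a 0) (hmono : StrictMono a) :
    ∀ ε : ℝ, 0 < ε → ∃ N : ℕ, ∀ s : ℕ,
      s ∈ AddSubmonoid.closure (Set.range a) → N ≤ s →
      |(s : ℝ) / (lam a s : ℝ) - (a (Fin.last r) : ℝ)| < ε :=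
  stmt0_general a hmono
end

section
/- Let S be the numerical semigroup (additive submonoid of ℕ) generated by integers 0 < a_1 < ⋯ < a_r, and for s ∈ S let λ(s) = min{λ_1 + ⋯ + λ_r : λ_i ∈ ℕ, s = λ_1 a_1 + ⋯ + λ_r a_r}. Let α and β be nonnegative real numbers with α < 1. Then there exists L ∈ ℕ such that for every integer l ≥ L and every s ∈ S with s ≤ a_r·α·l + β, one has λ(s) ≤ l. -/
/-!
Let `N = a_r` be the largest generator. In any representation `s = ∑ cᵢ aᵢ`,
trading `N` copies of `aᵢ` for `aᵢ ≤ N` copies of `N` keeps the value and does not increase the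
number of summands, so some representation has `cᵢ < N` for every `i ≠ r`. Its last coefficient is
at most `s / N`, whence `λ(s) ≤ r N + s / N ≤ r N + α l + β / N`, which is at most `l` once
`(1 - α) l ≥ r N + β / N`.
-/

open Finset

lemma lam_sum_mul_le {r : ℕ} (a c : Fin r → ℕ) : lam a (∑ i, c i * a i) ≤ ∑ i, c i :=
  Nat.sInf_le ⟨c, rfl, rfl⟩

lemma exists_sum_mul_eq_of_forall_le {ι : Type*} [Fintype ι] [DecidableEq ι] (a c : ι → ℕ)
    {m : ι} (hm : 0 < a m) (hle : ∀ i, a i ≤ a m) :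
    ∃ d : ι → ℕ, ∑ i, d i * a i = ∑ i, c i * a i ∧ ∑ i, d i ≤ ∑ i, c i ∧
      ∀ i ≠ m, d i < a m := by
  set N := a m
  -- keep `cᵢ mod N` copies of each `aᵢ` and move the rest, `(cᵢ / N) * aᵢ` copies of `N`, to `m`
  set E := ∑ j, c j / N * a j
  refine ⟨fun i => c i % N + if i = m then E else 0, ?_, ?_, fun i hi => ?_⟩
  · simp only [add_mul, ite_mul, zero_mul, sum_add_distrib, sum_ite_eq', mem_univ, if_true, E,
      sum_mul]
    rw [← sum_add_distrib]
    refine sum_congr rfl fun i _ => ?_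
    conv_rhs => rw [← Nat.mod_add_div (c i) N]
    ring
  · simp only [sum_add_distrib, sum_ite_eq', mem_univ, if_true, E]
    calc ∑ i, c i % N + ∑ j, c j / N * a j ≤ ∑ i, c i % N + ∑ j, c j / N * N := by
          gcongr with j; exact hle j
      _ = ∑ i, c i := by
          rw [← sum_add_distrib]
          exact sum_congr rfl fun i _ => by rw [mul_comm]; exact Nat.mod_add_div (c i) N
  · simpa [hi] using Nat.mod_lt (c i) hm

lemma lam_le_of_mem_closure {r : ℕ} (a : Fin (r + 1) → ℕ) {m : Fin (r + 1)} (hm : 0 < a m)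
    (hle : ∀ i, a i ≤ a m) {s : ℕ} (hs : s ∈ AddSubmonoid.closure (Set.range a)) :
    lam a s ≤ r * a m + s / a m := by
  obtain ⟨c, rfl⟩ := AddSubmonoid.exists_of_mem_closure_range a s hs
  simp only [smul_eq_mul]
  obtain ⟨d, hval, hcount, hlt⟩ := exists_sum_mul_eq_of_forall_le a c hm hle
  have hrest : ∑ i ∈ univ.erase m, d i ≤ r * a m := by
    simpa using sum_le_card_nsmul (univ.erase m) d (a m)
      fun i hi => (hlt i (ne_of_mem_erase hi)).le
  have hlast : d m ≤ (∑ i, d i * a i) / a m :=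
    (Nat.le_div_iff_mul_le hm).2 (single_le_sum (f := fun i => d i * a i)
      (fun _ _ => Nat.zero_le _) (mem_univ m))
  calc lam a (∑ i, c i * a i) ≤ ∑ i, d i := hval ▸ lam_sum_mul_le a d
    _ = ∑ i ∈ univ.erase m, d i + d m := (sum_erase_add _ _ (mem_univ m)).symm
    _ ≤ r * a m + (∑ i, c i * a i) / a m := hval ▸ add_le_add hrest hlast

theorem stmt1_general {r : ℕ} (a : Fin (r + 1) → ℕ) (hpos : 0 < a 0) (hmono : StrictMono a)
    (α β : ℝ) (hα1 : α < 1) :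
    ∃ L : ℕ, ∀ l : ℕ, L ≤ l → ∀ s : ℕ,
      s ∈ AddSubmonoid.closure (Set.range a) →
      (s : ℝ) ≤ (a (Fin.last r) : ℝ) * α * l + β →
      lam a s ≤ l := by
  set N := a (Fin.last r)
  have hle : ∀ i, a i ≤ N := fun i => hmono.monotone (Fin.le_last i)
  have hNpos : 0 < N := hpos.trans_le (hle 0)
  have hN : (0 : ℝ) < N := by exact_mod_cast hNpos
  refine ⟨⌈(r * N + β / N) / (1 - α)⌉₊, fun l hl s hs hsl => ?_⟩
  have hL : r * N + β / N ≤ (1 - α) * l := by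
    refine (div_le_iff₀' (by linarith)).1 ((Nat.le_ceil _).trans ?_)
    exact_mod_cast hl
  have hlam := lam_le_of_mem_closure a hNpos hle hs
  have hsN : (s : ℝ) / N ≤ α * l + β / N := by
    rw [div_le_iff₀ hN, add_mul, div_mul_cancel₀ _ hN.ne']
    linarith
  have : (lam a s : ℝ) ≤ l :=
    calc (lam a s : ℝ) ≤ r * N + ((s / N : ℕ) : ℝ) := by exact_mod_cast hlam
      _ ≤ r * N + (s : ℝ) / N := by gcongr; exact Nat.cast_div_le
      _ ≤ l := by linarith
  exact_mod_cast this

/-- for the numerical semigroup `S` generated by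
`0 < a_1 < ⋯ < a_r` and nonnegative reals `α < 1` and `β`, there is `L ∈ ℕ`
such that for all `l ≥ L` and all `s ∈ S` with `s ≤ a_r·α·l + β` one has
`λ(s) ≤ l`. -/
theorem stmt1 {r : ℕ} (a : Fin (r + 1) → ℕ) (hpos : 0 < a 0) (hmono : StrictMono a)
    (α β : ℝ) (hα0 : 0 ≤ α) (hα1 : α < 1) (hβ : 0 ≤ β) :
    ∃ L : ℕ, ∀ l : ℕ, L ≤ l → ∀ s : ℕ,
      s ∈ AddSubmonoid.closure (Set.range a) →
      (s : ℝ) ≤ (a (Fin.last r) : ℝ) * α * l + β →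
      lam a s ≤ l :=
  stmt1_general a hpos hmono α β hα1
end

section
/- Let d ≥ 1 and 0 = a_0 < a_1 < ⋯ < a_r = d be integers, set b_i = d − a_i, and let S = ⟨a_0, …, a_r⟩ and T = ⟨b_0, …, b_r⟩ be the numerical semigroups generated by these numbers. Let α and β be nonnegative real numbers with α < 1. Then there exists L ∈ ℕ such that for every integer l ≥ L and every s ∈ S with s ≤ d·α·l + β and d·α·l + β ≤ d·l, there exist λ_0, …, λ_r ∈ ℕ with λ_0 + ⋯ + λ_r = l, s = λ_0 a_0 + ⋯ + λ_r a_r, and d·l − s = λ_0 b_0 + ⋯ + λ_r b_r (in particular d·l − s ∈ T). -/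
/-!
Write `s = ∑ μ i * a i`. Since `a i` copies of `a r = d` and `d` copies of `a i` have the same
sum, every coefficient but the last may be reduced below `d`; the representation then has at most
`s / d + (r + 1) * d` summands, which is at most `l` for large `l` because `s ≤ d α l + β` with
`α < 1`. Padding with copies of `a 0 = 0` makes the number of summands exactly `l`, and then
`∑ λ i * (d - a i) = d * l - s`.
-/

open Finset

theorem exists_sum_mul_eq_and_mul_sum_le {ι : Type*} [Fintype ι] (a : ι → ℕ) (j : ι)
    (μ : ι → ℕ) :
    ∃ ν : ι → ℕ, ∑ i, ν i * a i = ∑ i, μ i * a i ∧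
      a j * ∑ i, ν i ≤ ∑ i, μ i * a i + Fintype.card ι * a j ^ 2 := by
  classical
  set d := a j
  set X := ∑ k, μ k / d * a k
  refine ⟨fun i => μ i % d + if i = j then X else 0, ?_, ?_⟩
  · simp only [add_mul, ite_mul, zero_mul, sum_add_distrib, sum_ite_eq', mem_univ, if_true]
    rw [sum_mul, ← sum_add_distrib]
    refine sum_congr rfl fun i _ => ?_
    rw [mul_right_comm _ (a i), ← add_mul, Nat.mod_add_div']
  · have hmod : d * ∑ i, μ i % d ≤ Fintype.card ι * d ^ 2 := by
      rcases Nat.eq_zero_or_pos d with hd | hd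
      · simp [hd]
      calc d * ∑ i, μ i % d ≤ d * ∑ _i : ι, d := by
            gcongr with i; exact (Nat.mod_lt _ hd).le
        _ = Fintype.card ι * d ^ 2 := by simp [sum_const]; ring
    have hX : d * X ≤ ∑ i, μ i * a i := by
      rw [mul_sum]
      refine sum_le_sum fun k _ => ?_
      rw [← mul_assoc, mul_comm d]
      exact Nat.mul_le_mul_right _ (Nat.div_mul_le_self _ _)
    simp only [sum_add_distrib, sum_ite_eq', mem_univ, if_true, mul_add]
    omega

theorem exists_sum_eq_and_sum_mul_eq_of_sum_le {ι : Type*} [Fintype ι] (a : ι → ℕ) {i₀ : ι}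
    (ha : a i₀ = 0) (ν : ι → ℕ) {l : ℕ} (hl : ∑ i, ν i ≤ l) :
    ∃ c : ι → ℕ, ∑ i, c i = l ∧ ∑ i, c i * a i = ∑ i, ν i * a i := by
  classical
  refine ⟨ν + (Pi.single i₀ (l - ∑ i, ν i) : ι → ℕ), ?_, ?_⟩
  · simp only [Pi.add_apply, sum_add_distrib, Fintype.sum_pi_single']
    omega
  · have hpad : ∑ i, (Pi.single i₀ (l - ∑ i, ν i) : ι → ℕ) i * a i = 0 :=
      sum_eq_zero fun i _ => by
        rcases eq_or_ne i i₀ with rfl | hi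
        · simp [ha]
        · simp [Pi.single_eq_of_ne hi]
    simp only [Pi.add_apply, add_mul, sum_add_distrib, hpad, add_zero]

theorem sum_mul_tsub_eq {ι : Type*} (s : Finset ι) (c a : ι → ℕ) {d : ℕ}
    (had : ∀ i ∈ s, a i ≤ d) :
    ∑ i ∈ s, c i * (d - a i) = d * ∑ i ∈ s, c i - ∑ i ∈ s, c i * a i := by
  rw [mul_comm, sum_mul, ← sum_tsub_distrib _ fun i hi => Nat.mul_le_mul_left _ (had i hi)]
  exact sum_congr rfl fun i _ => Nat.mul_sub _ _ _

theorem exists_nat_forall_mul_add_le_mul {d α β : ℝ} (hd : 0 < d) (hα : α < 1) :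
    ∃ L : ℕ, ∀ l : ℕ, L ≤ l → d * α * l + β ≤ d * l := by
  refine ⟨⌈β / (d * (1 - α))⌉₊, fun l hl => ?_⟩
  have := (div_le_iff₀ (mul_pos hd (sub_pos.mpr hα))).mp (Nat.ceil_le.mp hl)
  linarith

theorem stmt2_general {r : ℕ} (d : ℕ) (hd : 1 ≤ d) (a b : Fin (r + 1) → ℕ)
    (ha0 : a 0 = 0) (hmono : StrictMono a) (har : a (Fin.last r) = d)
    (hb : ∀ i, b i = d - a i)
    (α β : ℝ) (hα1 : α < 1) :
    ∃ L : ℕ, ∀ l : ℕ, L ≤ l → ∀ s : ℕ,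
      s ∈ AddSubmonoid.closure (Set.range a) →
      (s : ℝ) ≤ (d : ℝ) * α * l + β → ((d : ℝ) * α * l + β) ≤ (d : ℝ) * l →
      ∃ c : Fin (r + 1) → ℕ,
        (∑ i, c i) = l ∧ (∑ i, c i * a i) = s ∧ (∑ i, c i * b i) = d * l - s ∧
        d * l - s ∈ AddSubmonoid.closure (Set.range b) := by
  have hd0 : (0 : ℝ) < d := by exact_mod_cast hd
  obtain ⟨L, hL⟩ := exists_nat_forall_mul_add_le_mul (β := β + (r + 1) * d ^ 2) hd0 hα1
  refine ⟨L, fun l hl s hs hs_le _ => ?_⟩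
  obtain ⟨μ, hμ⟩ := AddSubmonoid.mem_closure_range_iff_of_fintype.mp hs
  simp only [smul_eq_mul] at hμ
  obtain ⟨ν, hνa, hνcard⟩ := exists_sum_mul_eq_and_mul_sum_le a (Fin.last r) μ
  rw [har, ← hμ, Fintype.card_fin] at hνcard
  have hνl : ∑ i, ν i ≤ l := by
    have : ((d * ∑ i, ν i : ℕ) : ℝ) ≤ d * l := by
      calc ((d * ∑ i, ν i : ℕ) : ℝ) ≤ s + (r + 1) * d ^ 2 := by exact_mod_cast hνcard
        _ ≤ d * α * l + β + (r + 1) * d ^ 2 := by linarith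
        _ ≤ d * l := by linarith [hL l hl]
    exact Nat.le_of_mul_le_mul_left (by exact_mod_cast this) hd
  obtain ⟨c, hcl, hca⟩ := exists_sum_eq_and_sum_mul_eq_of_sum_le a ha0 ν hνl
  rw [hνa, ← hμ] at hca
  have hcb : ∑ i, c i * b i = d * l - s := by
    simp only [hb]
    rw [sum_mul_tsub_eq _ _ _ fun i _ => har ▸ hmono.monotone (Fin.le_last i), hcl, hca]
  exact ⟨c, hcl, hca, hcb, AddSubmonoid.mem_closure_range_iff_of_fintype.mpr
    ⟨c, by simp only [smul_eq_mul, hcb]⟩⟩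

/-- complementary numerical semigroups `S = ⟨a_0,…,a_r⟩` and
`T = ⟨b_0,…,b_r⟩` with `a_0 = 0`, `a_r = d`, `b_i = d − a_i`.  For nonnegative
reals `α < 1` and `β` there is `L` such that for `l ≥ L` and `s ∈ S` with
`s ≤ d·α·l + β ≤ d·l`, `s` admits a representation `s = ∑ λ_i a_i` with
`∑ λ_i = l`, and then `d·l − s = ∑ λ_i b_i ∈ T`. -/
theorem stmt2 {r : ℕ} (d : ℕ) (hd : 1 ≤ d) (a b : Fin (r + 1) → ℕ)
    (ha0 : a 0 = 0) (hmono : StrictMono a) (har : a (Fin.last r) = d)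
    (hb : ∀ i, b i = d - a i)
    (α β : ℝ) (hα0 : 0 ≤ α) (hα1 : α < 1) (hβ : 0 ≤ β) :
    ∃ L : ℕ, ∀ l : ℕ, L ≤ l → ∀ s : ℕ,
      s ∈ AddSubmonoid.closure (Set.range a) →
      (s : ℝ) ≤ (d : ℝ) * α * l + β → ((d : ℝ) * α * l + β) ≤ (d : ℝ) * l →
      ∃ c : Fin (r + 1) → ℕ,
        (∑ i, c i) = l ∧ (∑ i, c i * a i) = s ∧ (∑ i, c i * b i) = d * l - s ∧
        d * l - s ∈ AddSubmonoid.closure (Set.range b) :=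
  stmt2_general d hd a b ha0 hmono har hb α β hα1
end

section
/- Let k be a field and R = k[x,y]. Fix integers 0 = a_0 < a_1 < ⋯ < a_r = d (r ≥ 1), set b_i = d − a_i, let I = ⟨x^{a_0}y^{b_0}, …, x^{a_r}y^{b_r}⟩ ⊆ R, and let S = ⟨a_0, …, a_r⟩ and T = ⟨b_0, …, b_r⟩ be the numerical semigroups generated by the exponents. Then there exists an integer L such that for every l ≥ L, I^l equals the ideal generated by all monomials x^s y^t with s ∈ S, t ∈ T, and s + t = d·l. -/
/-!
Every product of `l` generators `x^{a_i} y^{b_i}` is a monomial `x^s y^t` with `s ∈ S`, `t ∈ T`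
and `s + t = d l`. Conversely, write `s = ∑ f_i a_i`; since `a_r = d` is
one of the generators, every `f_i` with `i ≠ r` may be reduced below `d`, so some representation
has `d ∑ f_i ≤ s + d² (r + 1)`, and likewise for `t`. If `l ≥ 2d(r + 1)`, adding the two bounds
shows that one of the representations, say that of `s`, uses at most `l` generators; padding it
with the generator `y^d = x^{a_0} y^{b_0}` writes `x^s y^t` as a product of exactly `l` generators.
-/

open MvPolynomial

lemma exists_bounded_sum_mul_eq_of_mem_closure {ι : Type*} [Fintype ι] {c : ι → ℕ} {d : ℕ}
    {j : ι} (hj : c j = d) {s : ℕ} (hs : s ∈ AddSubmonoid.closure (Set.range c)) :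
    ∃ f : ι → ℕ, ∑ i, f i * c i = s ∧ d * ∑ i, f i ≤ s + d * d * Fintype.card ι := by
  classical
  obtain ⟨f, rfl⟩ := AddSubmonoid.mem_closure_range_iff_of_fintype.1 hs
  simp only [smul_eq_mul]
  -- Trade `d` copies of each `c i` for `c i` copies of `c j = d`.
  set q := ∑ i, f i / d * c i
  refine ⟨fun i => f i % d + if i = j then q else 0, ?_, ?_⟩
  · simp only [add_mul, Finset.sum_add_distrib, ite_mul, zero_mul, Finset.sum_ite_eq',
      Finset.mem_univ, if_true, hj, q, Finset.sum_mul]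
    rw [← Finset.sum_add_distrib]
    refine Finset.sum_congr rfl fun i _ => ?_
    calc f i % d * c i + f i / d * c i * d = (d * (f i / d) + f i % d) * c i := by ring
      _ = f i * c i := by rw [Nat.div_add_mod]
  · have hmod : ∀ i, d * (f i % d) ≤ d * d := fun i => by
      rcases d.eq_zero_or_pos with rfl | hd
      · simp
      · exact Nat.mul_le_mul_left d (Nat.mod_lt _ hd).le
    have hq : d * q ≤ ∑ i, f i * c i := by
      rw [Finset.mul_sum]
      refine Finset.sum_le_sum fun i _ => ?_
      calc d * (f i / d * c i) = d * (f i / d) * c i := by ring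
        _ ≤ f i * c i := Nat.mul_le_mul_right _ (Nat.mul_div_le _ _)
    calc d * ∑ i, (f i % d + if i = j then q else 0)
        = ∑ i, d * (f i % d) + d * q := by
          simp only [Finset.sum_add_distrib, Finset.sum_ite_eq', Finset.mem_univ, if_true,
            mul_add, Finset.mul_sum]
      _ ≤ ∑ _i : ι, d * d + ∑ i, f i * c i :=
          Nat.add_le_add (Finset.sum_le_sum fun i _ => hmod i) hq
      _ = ∑ i, f i * c i + d * d * Fintype.card ι := by
          rw [Finset.sum_const, Finset.card_univ, smul_eq_mul]; ring

section MonomialIdeals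

variable {R : Type*} [CommSemiring R] (x y : R)

def monomialIdeal {ι : Type*} (a b : ι → ℕ) : Ideal R :=
  Ideal.span (Set.range fun i => x ^ a i * y ^ b i)

def semigroupMonomialIdeal (S T : AddSubmonoid ℕ) (n : ℕ) : Ideal R :=
  Ideal.span {m | ∃ s t : ℕ, s ∈ S ∧ t ∈ T ∧ s + t = n ∧ m = x ^ s * y ^ t}

variable {x y}

lemma pow_mul_pow_mem_monomialIdeal {ι : Type*} (a b : ι → ℕ) (i : ι) :
    x ^ a i * y ^ b i ∈ monomialIdeal x y a b :=
  Ideal.subset_span ⟨i, rfl⟩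

lemma monomialIdeal_comm {ι : Type*} (a b : ι → ℕ) :
    monomialIdeal x y a b = monomialIdeal y x b a := by
  simp only [monomialIdeal, mul_comm]

lemma semigroupMonomialIdeal_mul_le (S T : AddSubmonoid ℕ) (m n : ℕ) :
    semigroupMonomialIdeal x y S T m * semigroupMonomialIdeal x y S T n
      ≤ semigroupMonomialIdeal x y S T (m + n) := by
  rw [semigroupMonomialIdeal, semigroupMonomialIdeal, Ideal.span_mul_span', Ideal.span_le]
  rintro _ ⟨_, ⟨s, t, hs, ht, rfl, rfl⟩, _, ⟨s', t', hs', ht', rfl, rfl⟩, rfl⟩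
  exact Ideal.subset_span ⟨s + s', t + t', add_mem hs hs', add_mem ht ht', by ring, by ring⟩

lemma semigroupMonomialIdeal_pow_le (S T : AddSubmonoid ℕ) (n l : ℕ) :
    semigroupMonomialIdeal x y S T n ^ l ≤ semigroupMonomialIdeal x y S T (n * l) := by
  induction l with
  | zero =>
    rw [pow_zero, Ideal.one_eq_top, top_le_iff, Ideal.eq_top_iff_one]
    exact Ideal.subset_span ⟨0, 0, zero_mem S, zero_mem T, rfl, by simp⟩
  | succ l ih =>
    calc semigroupMonomialIdeal x y S T n ^ (l + 1)
        ≤ semigroupMonomialIdeal x y S T (n * l) * semigroupMonomialIdeal x y S T n :=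
          pow_succ (semigroupMonomialIdeal x y S T n) l ▸ Ideal.mul_mono_left ih
      _ ≤ semigroupMonomialIdeal x y S T (n * (l + 1)) :=
          (semigroupMonomialIdeal_mul_le S T _ _).trans_eq (by rw [mul_add_one])

variable {ι : Type*} {a b : ι → ℕ} {d : ℕ}

lemma monomialIdeal_le_semigroupMonomialIdeal (hab : ∀ i, a i + b i = d) :
    monomialIdeal x y a b
      ≤ semigroupMonomialIdeal x y (AddSubmonoid.closure (Set.range a))
          (AddSubmonoid.closure (Set.range b)) d := by
  rw [monomialIdeal, Ideal.span_le]
  rintro _ ⟨i, rfl⟩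
  exact Ideal.subset_span ⟨a i, b i, AddSubmonoid.subset_closure ⟨i, rfl⟩,
    AddSubmonoid.subset_closure ⟨i, rfl⟩, hab i, rfl⟩

lemma monomialIdeal_pow_le_semigroupMonomialIdeal (hab : ∀ i, a i + b i = d) (l : ℕ) :
    monomialIdeal x y a b ^ l
      ≤ semigroupMonomialIdeal x y (AddSubmonoid.closure (Set.range a))
          (AddSubmonoid.closure (Set.range b)) (d * l) :=
  (Ideal.pow_right_mono (monomialIdeal_le_semigroupMonomialIdeal hab) l).trans
    (semigroupMonomialIdeal_pow_le _ _ d l)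

variable [Fintype ι]

lemma prod_pow_mem_monomialIdeal_pow (a b f : ι → ℕ) :
    ∏ i, (x ^ a i * y ^ b i) ^ f i ∈ monomialIdeal x y a b ^ ∑ i, f i := by
  rw [← Finset.prod_pow_eq_pow_sum]
  exact Ideal.prod_mem_prod fun i _ => Ideal.pow_mem_pow (pow_mul_pow_mem_monomialIdeal a b i) _

lemma prod_pow_mul_pow (a b f : ι → ℕ) :
    ∏ i, (x ^ a i * y ^ b i) ^ f i = x ^ (∑ i, f i * a i) * y ^ (∑ i, f i * b i) := by
  simp only [mul_pow, ← pow_mul, Finset.prod_mul_distrib, Finset.prod_pow_eq_pow_sum, mul_comm]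

lemma mem_monomialIdeal_pow_of_sum_le (hab : ∀ i, a i + b i = d) {i₀ : ι} (ha₀ : a i₀ = 0)
    {f : ι → ℕ} {s t l : ℕ} (hf : ∑ i, f i * a i = s) (hfl : ∑ i, f i ≤ l)
    (hst : s + t = d * l) :
    x ^ s * y ^ t ∈ monomialIdeal x y a b ^ l := by
  have hfab : ∑ i, f i * a i + ∑ i, f i * b i = d * ∑ i, f i := by
    rw [← Finset.sum_add_distrib, Finset.mul_sum]
    exact Finset.sum_congr rfl fun i _ => by rw [← mul_add, hab, mul_comm]
  have hdl : d * ∑ i, f i ≤ d * l := Nat.mul_le_mul_left d hfl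
  -- Pad the product by the generator `x ^ a i₀ * y ^ b i₀ = y ^ d`.
  have hpad : x ^ s * y ^ t
      = (∏ i, (x ^ a i * y ^ b i) ^ f i) * (x ^ a i₀ * y ^ b i₀) ^ (l - ∑ i, f i) := by
    rw [prod_pow_mul_pow, ha₀, show b i₀ = d by simpa [ha₀] using hab i₀, pow_zero, one_mul,
      ← pow_mul, mul_assoc, ← pow_add, hf, Nat.mul_sub]
    congr 2
    omega
  rw [← Nat.add_sub_cancel' hfl, pow_add, hpad]
  exact Ideal.mul_mem_mul (prod_pow_mem_monomialIdeal_pow a b f)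
    (Ideal.pow_mem_pow (pow_mul_pow_mem_monomialIdeal a b i₀) _)

lemma semigroupMonomialIdeal_le_monomialIdeal_pow (hab : ∀ i, a i + b i = d) (hd : 0 < d)
    {i₀ j₀ : ι} (ha₀ : a i₀ = 0) (haj₀ : a j₀ = d) {l : ℕ} (hl : 2 * d * Fintype.card ι ≤ l) :
    semigroupMonomialIdeal x y (AddSubmonoid.closure (Set.range a))
        (AddSubmonoid.closure (Set.range b)) (d * l) ≤ monomialIdeal x y a b ^ l := by
  rw [semigroupMonomialIdeal, Ideal.span_le]
  rintro _ ⟨s, t, hs, ht, hst, rfl⟩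
  have hbj₀ : b j₀ = 0 := by have := hab j₀; omega
  have hbi₀ : b i₀ = d := by have := hab i₀; omega
  obtain ⟨f, hf, hfs⟩ := exists_bounded_sum_mul_eq_of_mem_closure haj₀ hs
  obtain ⟨g, hg, hgt⟩ := exists_bounded_sum_mul_eq_of_mem_closure hbi₀ ht
  have hfg : ∑ i, f i ≤ l ∨ ∑ i, g i ≤ l := by
    by_contra! h
    have hsum : d * (∑ i, f i + ∑ i, g i) ≤ d * (2 * l) := by
      nlinarith [Nat.mul_le_mul_left d hl]
    have := Nat.le_of_mul_le_mul_left hsum hd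
    omega
  rcases hfg with hfl | hgl
  · exact mem_monomialIdeal_pow_of_sum_le hab ha₀ hf hfl hst
  · rw [mul_comm, monomialIdeal_comm]
    exact mem_monomialIdeal_pow_of_sum_le (fun i => (add_comm _ _).trans (hab i)) hbj₀ hg hgl
      (by omega)

end MonomialIdeals

/-- with `I = ⟨x^{a_i} y^{b_i}⟩ ⊆ k[x,y]` where `0 = a_0 < ⋯ < a_r = d`
and `b_i = d − a_i`, and `S = ⟨a_i⟩`, `T = ⟨b_i⟩`, there exists `L` such that for all
`l ≥ L`, `I^l = ⟨x^s y^t : s ∈ S, t ∈ T, s + t = d·l⟩`. -/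
theorem stmt4 {K : Type*} [Field K] {r : ℕ} (hr : 1 ≤ r) (d : ℕ)
    (a b : Fin (r + 1) → ℕ) (ha0 : a 0 = 0) (hmono : StrictMono a)
    (har : a (Fin.last r) = d) (hb : ∀ i, b i = d - a i) :
    ∃ L : ℕ, ∀ l : ℕ, L ≤ l →
      (Ideal.span (Set.range fun i => X 0 ^ a i * X 1 ^ b i) :
          Ideal (MvPolynomial (Fin 2) K)) ^ l
        = Ideal.span {m : MvPolynomial (Fin 2) K | ∃ s t : ℕ,
            s ∈ AddSubmonoid.closure (Set.range a) ∧
            t ∈ AddSubmonoid.closure (Set.range b) ∧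
            s + t = d * l ∧ m = X 0 ^ s * X 1 ^ t} := by
  have hab : ∀ i, a i + b i = d := fun i => by
    have := har ▸ hmono.monotone (Fin.le_last i)
    rw [hb]; omega
  have hd : 0 < d := har ▸ ha0 ▸ hmono (Fin.val_pos_iff.1 hr : 0 < Fin.last r)
  refine ⟨2 * d * (r + 1), fun l hl => le_antisymm ?_ ?_⟩
  · exact monomialIdeal_pow_le_semigroupMonomialIdeal hab l
  · exact semigroupMonomialIdeal_le_monomialIdeal_pow hab hd ha0 har (by simpa using hl)
end

section
/- Let k be a field and R = k[x,y]. Fix integers 0 = a_0 < a_1 < ⋯ < a_r = d (r ≥ 1), set b_i = d − a_i, let I = ⟨x^{a_0}y^{b_0}, …, x^{a_r}y^{b_r}⟩ ⊆ R, and let S = ⟨a_0, …, a_r⟩ and T = ⟨b_0, …, b_r⟩ be the numerical semigroups generated by the exponents. Then there exists an integer L such that for every l ≥ L: (1) if s ∈ S and u ∈ ℕ satisfy s ≤ u and s + u ≥ d·l, then x^s y^u ∈ I^l; and (2) if t ∈ T and v ∈ ℕ satisfy t ≤ v and t + v ≥ d·l, then x^v y^t ∈ I^l. -/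
/-!
A product of `l` generators of `I` is the monomial `x^{s'} y^{d l - s'}` where `s'` is a sum of
`l` exponents `a_i`, so it suffices to find such an `s' ≤ s` with `d l - s' ≤ u`; as `a_0 = 0`,
"`l` exponents" may be relaxed to "at most `l`". Reducing the coefficients of a representation
of `s` modulo `d` writes `s` as a sum of at most `s / d + (r + 1) d` exponents, so for
`l ≥ 2 (r + 1) d` either `s` itself qualifies, or `s` is large and `s' = d (l - (r + 1) d)` does.
The second claim is the first one with the roles of `a` and `b` exchanged.
-/

open MvPolynomial

section Coefficients

variable {ι : Type*} [Fintype ι]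

theorem exists_coeffs_eq_and_mul_sum_le (f : ι → ℕ) {d : ℕ} {w : ι} (hw : f w = d) {t : ℕ}
    (ht : t ∈ AddSubmonoid.closure (Set.range f)) :
    ∃ c : ι → ℕ, ∑ i, c i * f i = t ∧ d * ∑ i, c i ≤ t + d * (Fintype.card ι * d) := by
  classical
  obtain ⟨c, rfl⟩ := AddSubmonoid.exists_of_mem_closure_range f t ht
  simp only [smul_eq_mul]
  -- keep `c i % d` copies of each generator and trade the rest for copies of `f w = d`
  set q := ∑ j, c j / d * f j
  refine ⟨fun i => c i % d + (Pi.single w q : ι → ℕ) i, ?_, ?_⟩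
  · have hsplit : ∀ i, c i * f i = c i % d * f i + d * (c i / d * f i) := fun i => by
      rw [← mul_assoc, ← add_mul, Nat.mod_add_div]
    simp only [add_mul, Finset.sum_add_distrib, Pi.single_apply, ite_mul, zero_mul,
      Finset.sum_ite_eq', Finset.mem_univ, if_true, hw, hsplit, ← Finset.mul_sum]
    ring
  · have hmod : ∀ i, d * (c i % d) ≤ d * d := fun i => by
      rcases Nat.eq_zero_or_pos d with rfl | hd
      · simp
      · exact Nat.mul_le_mul_left d (Nat.mod_lt _ hd).le
    have hq : d * q ≤ ∑ i, c i * f i := by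
      rw [Finset.mul_sum]
      exact Finset.sum_le_sum fun i _ => by
        rw [← mul_assoc]; exact Nat.mul_le_mul_right _ (Nat.mul_div_le _ _)
    have hmods : d * ∑ i, c i % d ≤ d * (Fintype.card ι * d) := by
      rw [Finset.mul_sum, mul_left_comm, ← smul_eq_mul (Fintype.card ι), ← Finset.card_univ,
        ← Finset.sum_const]
      exact Finset.sum_le_sum fun i _ => hmod i
    simp only [Finset.sum_add_distrib, Finset.sum_pi_single', Finset.mem_univ, if_true]
    rw [mul_add]
    omega

theorem exists_coeffs_sum_eq_of_sum_le {f : ι → ℕ} {z : ι} (hz : f z = 0) {c : ι → ℕ} {l : ℕ}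
    (hc : ∑ i, c i ≤ l) :
    ∃ c' : ι → ℕ, ∑ i, c' i = l ∧ ∑ i, c' i * f i = ∑ i, c i * f i := by
  classical
  refine ⟨c + Pi.single z (l - ∑ i, c i : ℕ), ?_, ?_⟩
  · simp only [Pi.add_apply, Finset.sum_add_distrib, Finset.sum_pi_single', Finset.mem_univ,
      if_true]
    omega
  · simp [add_mul, Finset.sum_add_distrib, Pi.single_apply, hz]

theorem exists_coeffs_sum_eq_of_mem_closure {f g : ι → ℕ} {d : ℕ} (hfg : ∀ i, f i + g i = d)
    {z w : ι} (hz : f z = 0) (hw : f w = d) {l t v : ℕ} (hl : 2 * (Fintype.card ι * d) ≤ l)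
    (ht : t ∈ AddSubmonoid.closure (Set.range f)) (htv : t ≤ v) (hsum : d * l ≤ t + v) :
    ∃ c : ι → ℕ, ∑ i, c i = l ∧ ∑ i, c i * f i ≤ t ∧ ∑ i, c i * g i ≤ v := by
  classical
  set M := Fintype.card ι * d
  have hdM : 2 * (d * M) ≤ d * l := by nlinarith
  have hsplit : d * (l - M) + d * M = d * l := by rw [← mul_add, Nat.sub_add_cancel (by omega)]
  have hshort : ∃ c : ι → ℕ, ∑ i, c i ≤ l ∧ ∑ i, c i * f i ≤ t ∧ d * l ≤ v + ∑ i, c i * f i := by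
    by_cases hlarge : d * (l - M) ≤ t
    · have hval : ∑ i, (Pi.single w (l - M) : ι → ℕ) i * f i = d * (l - M) := by
        simp [Pi.single_apply, hw, mul_comm]
      exact ⟨Pi.single w (l - M), by simp, hval ▸ hlarge, by omega⟩
    · obtain ⟨c, hc, hcount⟩ : ∃ c : ι → ℕ, ∑ i, c i * f i = t ∧ d * ∑ i, c i ≤ t + d * M :=
        exists_coeffs_eq_and_mul_sum_le f hw ht
      exact ⟨c, (Nat.lt_of_mul_lt_mul_left (a := d) (by omega)).le, hc.le, by omega⟩
  obtain ⟨c, hcl, hcf, hcv⟩ := hshort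
  obtain ⟨c', rfl, hc'⟩ := exists_coeffs_sum_eq_of_sum_le hz hcl
  have hfg_sum : ∑ i, c' i * f i + ∑ i, c' i * g i = d * ∑ i, c' i := by
    simp only [← Finset.sum_add_distrib, ← mul_add, hfg, Finset.sum_mul, mul_comm d]
  exact ⟨c', rfl, hc' ▸ hcf, by omega⟩

theorem pow_mul_pow_mem_pow_sum {R : Type*} [CommSemiring R] {I : Ideal R} {x y : R}
    {a b : ι → ℕ} (h : ∀ i, x ^ a i * y ^ b i ∈ I) (c : ι → ℕ) {s u : ℕ}
    (hs : ∑ i, c i * a i ≤ s) (hu : ∑ i, c i * b i ≤ u) :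
    x ^ s * y ^ u ∈ I ^ ∑ i, c i := by
  have hprod : ∏ i, (x ^ a i * y ^ b i) ^ c i ∈ I ^ ∑ i, c i := by
    rw [← Finset.prod_pow_eq_pow_sum]
    exact Ideal.prod_mem_prod fun i _ => Ideal.pow_mem_pow (h i) _
  have hmonomial : ∏ i, (x ^ a i * y ^ b i) ^ c i = x ^ (∑ i, c i * a i) * y ^ ∑ i, c i * b i := by
    simp only [mul_pow, ← pow_mul', Finset.prod_mul_distrib, Finset.prod_pow_eq_pow_sum]
  rw [hmonomial] at hprod
  exact Ideal.mem_of_dvd _ (mul_dvd_mul (pow_dvd_pow _ hs) (pow_dvd_pow _ hu)) hprod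

end Coefficients

theorem stmt5_general {K : Type*} [Field K] {r : ℕ} (d : ℕ)
    (a b : Fin (r + 1) → ℕ) (ha0 : a 0 = 0) (hmono : StrictMono a)
    (har : a (Fin.last r) = d) (hb : ∀ i, b i = d - a i)
    (I : Ideal (MvPolynomial (Fin 2) K))
    (hI : I = Ideal.span (Set.range fun i => X 0 ^ a i * X 1 ^ b i)) :
    ∃ L : ℕ, ∀ l : ℕ, L ≤ l →
      (∀ s u : ℕ, s ∈ AddSubmonoid.closure (Set.range a) → s ≤ u → d * l ≤ s + u →
        X 0 ^ s * X 1 ^ u ∈ I ^ l) ∧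
      (∀ t v : ℕ, t ∈ AddSubmonoid.closure (Set.range b) → t ≤ v → d * l ≤ t + v →
        X 0 ^ v * X 1 ^ t ∈ I ^ l) := by
  have hab : ∀ i, a i + b i = d := fun i => by
    have : a i ≤ d := har ▸ hmono.monotone (Fin.le_last i)
    rw [hb]; omega
  have hgen : ∀ i, (X 0 ^ a i * X 1 ^ b i : MvPolynomial (Fin 2) K) ∈ I :=
    fun i => hI ▸ Ideal.subset_span ⟨i, rfl⟩
  refine ⟨2 * (Fintype.card (Fin (r + 1)) * d), fun l hl => ⟨?_, ?_⟩⟩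
  · intro s u hs hsu hsum
    obtain ⟨c, rfl, hca, hcb⟩ :=
      exists_coeffs_sum_eq_of_mem_closure hab ha0 har hl hs hsu hsum
    exact pow_mul_pow_mem_pow_sum hgen c hca hcb
  · intro t v ht htv hsum
    obtain ⟨c, rfl, hcb, hca⟩ :=
      exists_coeffs_sum_eq_of_mem_closure (fun i => (add_comm _ _).trans (hab i))
      (by rw [hb, har, Nat.sub_self]) (by rw [hb, ha0, Nat.sub_zero]) hl ht htv hsum
    exact pow_mul_pow_mem_pow_sum hgen c hca hcb

/-- with `I = ⟨x^{a_i} y^{b_i}⟩ ⊆ k[x,y]` where `0 = a_0 < ⋯ < a_r = d`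
and `b_i = d − a_i`, and `S = ⟨a_i⟩`, `T = ⟨b_i⟩`, there exists `L` such that for all
`l ≥ L`: (1) if `s ∈ S`, `s ≤ u` and `s + u ≥ d·l` then `x^s y^u ∈ I^l`; and
(2) if `t ∈ T`, `t ≤ v` and `t + v ≥ d·l` then `x^v y^t ∈ I^l`. -/
theorem stmt5 {K : Type*} [Field K] {r : ℕ} (hr : 1 ≤ r) (d : ℕ)
    (a b : Fin (r + 1) → ℕ) (ha0 : a 0 = 0) (hmono : StrictMono a)
    (har : a (Fin.last r) = d) (hb : ∀ i, b i = d - a i)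
    (I : Ideal (MvPolynomial (Fin 2) K))
    (hI : I = Ideal.span (Set.range fun i => X 0 ^ a i * X 1 ^ b i)) :
    ∃ L : ℕ, ∀ l : ℕ, L ≤ l →
      (∀ s u : ℕ, s ∈ AddSubmonoid.closure (Set.range a) → s ≤ u → d * l ≤ s + u →
        X 0 ^ s * X 1 ^ u ∈ I ^ l) ∧
      (∀ t v : ℕ, t ∈ AddSubmonoid.closure (Set.range b) → t ≤ v → d * l ≤ t + v →
        X 0 ^ v * X 1 ^ t ∈ I ^ l) :=
  stmt5_general d a b ha0 hmono har hb I hI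
end

section
/- Let k be a field and R = k[x,y]. Fix integers 0 = a_0 < a_1 < ⋯ < a_r = d (r ≥ 1), set b_i = d − a_i, let I = ⟨x^{a_0}y^{b_0}, …, x^{a_r}y^{b_r}⟩ ⊆ R, let S = ⟨a_0, …, a_r⟩ and T = ⟨b_0, …, b_r⟩ be the numerical semigroups generated by the exponents, and define the ideals I_S = ⟨x^s y^{d−s} : s ∈ S, s ≤ d⟩ and I_T = ⟨x^{d−t} y^t : t ∈ T, t ≤ d⟩. Then the Ratliff-Rush ideal associated to I satisfies Ĩ = I_S ∩ I_T, i.e., ⋃_{l ≥ 1} (I^{l+1} : I^l) = I_S ∩ I_T. -/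
open Finset MvPolynomial Pointwise

/-- The Ratliff-Rush set associated to an ideal `I`: the union
`⋃_{l ≥ 1} (I^{l+1} : I^l)`. -/
def RRset {R : Type*} [CommRing R] (I : Ideal R) : Set R :=
  ⋃ l : ℕ, ⋃ (_ : 1 ≤ l), ((I ^ (l + 1)).colon ((I ^ l : Ideal R) : Set R) : Set R)

lemma sum_if_mul {n : ℕ} (i : Fin n) (Kc : ℕ) (g : Fin n → ℕ) :
    ∑ j, (if j = i then Kc else 0) * g j = Kc * g i := by
  simp [ite_mul]

lemma sum_move {n : ℕ} (c c' rem add : Fin n → ℕ)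
    (h : ∀ j, c' j + rem j = c j + add j) (g : Fin n → ℕ) :
    (∑ j, c' j * g j) + (∑ j, rem j * g j) = (∑ j, c j * g j) + (∑ j, add j * g j) := by
  rw [← Finset.sum_add_distrib, ← Finset.sum_add_distrib]
  exact Finset.sum_congr rfl fun j _ => by rw [← add_mul, ← add_mul, h j]

lemma sum_ab {n : ℕ} (d : ℕ) (a b : Fin n → ℕ) (hab : ∀ j, a j + b j = d) (c : Fin n → ℕ) :
    (∑ i, c i * a i) + (∑ i, c i * b i) = (∑ i, c i) * d := by
  rw [← Finset.sum_add_distrib, Finset.sum_mul]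
  exact Finset.sum_congr rfl fun j _ => by rw [← mul_add, hab j]

lemma moveA {n : ℕ} (d : ℕ) (a b : Fin n → ℕ) (i0 : Fin n) (h0a : a i0 = 0) (h0b : b i0 = d)
    (u v : ℕ) (cA : Fin n → ℕ) (hab : ∀ j, a j + b j = d)
    (hsu : (∑ i, cA i * a i) ≤ u) (hsv : d ≤ v + ∑ i, cA i * a i)
    (c : Fin n → ℕ) (hc0 : (∑ i, cA i) - 1 ≤ c i0) (hpos : 1 ≤ ∑ i, cA i) :
    ∃ c' : Fin n → ℕ, (∑ i, c' i) = (∑ i, c i) + 1 ∧ (∑ i, c' i * a i) ≤ u + (∑ i, c i * a i) ∧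
      (∑ i, c' i * b i) ≤ v + (∑ i, c i * b i) := by
  obtain ⟨m, hm⟩ : ∃ m, ∑ i, cA i = m + 1 := ⟨(∑ i, cA i) - 1, by omega⟩
  rw [hm] at hc0
  obtain ⟨c', hc'⟩ : ∃ c' : Fin n → ℕ, c' = fun j => (c j - (if j = i0 then m else 0)) + cA j :=
    ⟨_, rfl⟩
  have hpt : ∀ j, c' j + (if j = i0 then m else 0) = c j + cA j := by
    intro j; by_cases h : j = i0 <;> simp [hc', h] <;> omega
  have h1 := sum_move c c' (fun j => if j = i0 then m else 0) cA hpt (fun _ => 1)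
  have ha := sum_move c c' (fun j => if j = i0 then m else 0) cA hpt a
  have hbb := sum_move c c' (fun j => if j = i0 then m else 0) cA hpt b
  rw [sum_if_mul] at h1 ha hbb
  simp only [mul_one] at h1
  simp only [h0a, mul_zero, add_zero] at ha
  rw [h0b] at hbb
  have hsum := sum_ab d a b hab cA
  rw [hm] at hsum
  have h2 : (m + 1) * d = m * d + d := by ring
  rw [h2] at hsum
  set P := m * d with hP
  exact ⟨c', by omega, by omega, by omega⟩

lemma key {r : ℕ} (hr : 1 ≤ r) (d : ℕ) (a b : Fin (r+1) → ℕ) (ha0 : a 0 = 0)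
    (hmono : StrictMono a) (har : a (Fin.last r) = d) (hb : ∀ i, b i = d - a i)
    (u v : ℕ)
    (cA : Fin (r+1) → ℕ) (hsu : (∑ i, cA i * a i) ≤ u) (hsv : d ≤ v + ∑ i, cA i * a i)
    (cB : Fin (r+1) → ℕ) (htv : (∑ i, cB i * b i) ≤ v) (htu : d ≤ u + ∑ i, cB i * b i) :
    ∃ l, 1 ≤ l ∧ ∀ c : Fin (r+1) → ℕ, (∑ i, c i) = l →
      ∃ c' : Fin (r+1) → ℕ, (∑ i, c' i) = l + 1 ∧
        (∑ i, c' i * a i) ≤ u + (∑ i, c i * a i) ∧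
        (∑ i, c' i * b i) ≤ v + (∑ i, c i * b i) := by
  have hd : ∀ i, a i ≤ d := fun i => har ▸ hmono.monotone (Fin.le_last i)
  have hab : ∀ j, a j + b j = d := fun j => by rw [hb j]; have := hd j; omega
  have hb0 : b 0 = d := by rw [hb 0, ha0]; omega
  have hblast : b (Fin.last r) = 0 := by rw [hb, har]; omega
  have hab' : ∀ j, b j + a j = d := fun j => by rw [add_comm]; exact hab j
  have h0last : (0 : Fin (r+1)) ≠ Fin.last r := by
    simp only [Fin.ne_iff_vne, Fin.val_zero, Fin.val_last]; omega
  have hsingle : ∀ (i0 : Fin (r+1)) (g : Fin (r+1) → ℕ),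
      (∑ i, (if i = i0 then 1 else 0) * g i) = g i0 := by
    intro i0 g; rw [sum_if_mul, one_mul]
  have hsingle1 : ∀ (i0 : Fin (r+1)), (∑ i, if i = i0 then 1 else 0) = 1 := by
    intro i0; simp
  by_cases hu : d ≤ u
  · refine ⟨1, le_refl 1, fun c hc => ?_⟩
    obtain ⟨c', h1, h2, h3⟩ := moveA d b a (Fin.last r) hblast har v u
      (fun j => if j = Fin.last r then 1 else 0) hab'
      (by rw [hsingle, hblast]; omega) (by rw [hsingle, hblast]; omega) c
      (by rw [hsingle1]; omega) (by rw [hsingle1])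
    exact ⟨c', by omega, by omega, by omega⟩
  by_cases hv : d ≤ v
  · refine ⟨1, le_refl 1, fun c hc => ?_⟩
    obtain ⟨c', h1, h2, h3⟩ := moveA d a b 0 ha0 hb0 u v
      (fun j => if j = 0 then 1 else 0) hab
      (by rw [hsingle, ha0]; omega) (by rw [hsingle, ha0]; omega) c
      (by rw [hsingle1]; omega) (by rw [hsingle1])
    exact ⟨c', by omega, by omega, by omega⟩
  -- main case: u < d and v < d
  push_neg at hu hv
  have hposA : 1 ≤ ∑ i, cA i := by
    by_contra h
    have h0 : ∀ i ∈ Finset.univ, cA i = (0:ℕ) := by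
      intro i _
      have := Finset.single_le_sum (f := cA) (fun j _ => Nat.zero_le _) (Finset.mem_univ i)
      omega
    have : (∑ i, cA i * a i) = 0 := Finset.sum_eq_zero fun i hi => by rw [h0 i hi, zero_mul]
    omega
  have hposB : 1 ≤ ∑ i, cB i := by
    by_contra h
    have h0 : ∀ i ∈ Finset.univ, cB i = (0:ℕ) := by
      intro i _
      have := Finset.single_le_sum (f := cB) (fun j _ => Nat.zero_le _) (Finset.mem_univ i)
      omega
    have : (∑ i, cB i * b i) = 0 := Finset.sum_eq_zero fun i hi => by rw [h0 i hi, zero_mul]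
    omega
  set cAl := ∑ i, cA i with hcAl
  set cBl := ∑ i, cB i with hcBl
  set Kc := cAl * d with hKc
  refine ⟨(r+1) * Kc + cAl + cBl, by omega, fun c hc => ?_⟩
  by_cases hA : cAl - 1 ≤ c 0
  · obtain ⟨c', h1, h2, h3⟩ := moveA d a b 0 ha0 hb0 u v cA hab hsu hsv c hA hposA
    exact ⟨c', by omega, h2, h3⟩
  by_cases hB : cBl - 1 ≤ c (Fin.last r)
  · obtain ⟨c', h1, h2, h3⟩ := moveA d b a (Fin.last r) hblast har v u cB hab' htv htu c hB hposB
    exact ⟨c', by omega, h3, h2⟩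
  -- pigeonhole: some middle index has c i ≥ Kc
  have hbig : ∃ i, i ≠ 0 ∧ i ≠ Fin.last r ∧ Kc ≤ c i := by
    by_contra hcon
    push_neg at hcon
    have hle : ∀ i, c i ≤ Kc + ((if i = 0 then c 0 else 0) +
        (if i = Fin.last r then c (Fin.last r) else 0)) := by
      intro i
      by_cases h1 : i = 0
      · subst h1; simp [h0last]
      by_cases h2 : i = Fin.last r
      · subst h2; simp [h1]
      · have := hcon i h1 h2; simp [h1, h2]; omega
    have hs := Finset.sum_le_sum (fun i (_ : i ∈ Finset.univ) => hle i)
    rw [Finset.sum_add_distrib, Finset.sum_add_distrib, Finset.sum_const] at hs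
    have e1 : (∑ i, if i = (0 : Fin (r+1)) then c 0 else 0) = c 0 := by simp
    have e2 : (∑ i, if i = Fin.last r then c (Fin.last r) else 0) = c (Fin.last r) := by simp
    rw [e1, e2, Finset.card_univ, Fintype.card_fin, smul_eq_mul] at hs
    omega
  obtain ⟨i, hi0, hil, hKi⟩ := hbig
  have hai1 : 1 ≤ a i := by
    have : a 0 < a i := hmono (Fin.pos_of_ne_zero hi0)
    omega
  have haid : a i < d := by
    have : a i < a (Fin.last r) := hmono (lt_of_le_of_ne (Fin.le_last i) hil)
    omega
  obtain ⟨e, hae⟩ : ∃ e, a i + e = d := ⟨d - a i, by omega⟩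
  have he1 : 1 ≤ e := by omega
  have hbi : b i = e := by rw [hb i]; omega
  obtain ⟨c'', hc''⟩ : ∃ c'' : Fin (r+1) → ℕ, c'' = fun j => (c j - (if j = i then Kc else 0)) +
      ((if j = Fin.last r then cAl * a i else 0) + (if j = 0 then cAl * e else 0)) := ⟨_, rfl⟩
  have hpt : ∀ j, c'' j + (if j = i then Kc else 0) =
      c j + ((if j = Fin.last r then cAl * a i else 0) + (if j = 0 then cAl * e else 0)) := by
    intro j
    by_cases h : j = i
    · subst h; simp [hc'', hi0, hil]; omega
    · simp [hc'', h]
  have hsum_add : ∀ g : Fin (r+1) → ℕ,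
      (∑ j, ((if j = Fin.last r then cAl * a i else 0) + (if j = 0 then cAl * e else 0)) * g j)
        = cAl * a i * g (Fin.last r) + cAl * e * g 0 := by
    intro g
    simp only [add_mul, Finset.sum_add_distrib, sum_if_mul]
  have h1 := sum_move c c'' _ _ hpt (fun _ => 1)
  have ha := sum_move c c'' _ _ hpt a
  have hbb := sum_move c c'' _ _ hpt b
  rw [sum_if_mul, hsum_add] at h1 ha hbb
  simp only [mul_one] at h1
  rw [har, ha0, mul_zero, add_zero] at ha
  rw [hblast, hb0, mul_zero, zero_add, hbi] at hbb
  have p1 : cAl * a i + cAl * e = Kc := by rw [hKc, ← hae]; ring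
  have p2 : Kc * a i = cAl * a i * d := by rw [hKc]; ring
  have p3 : Kc * e = cAl * e * d := by rw [hKc]; ring
  generalize hPA : cAl * a i = PA at h1 ha hbb p1 p2
  generalize hPE : cAl * e = PE at h1 hbb p1 p3
  generalize hQA : PA * d = QA at ha p2
  generalize hQE : PE * d = QE at hbb p3
  have hc''sum : (∑ j, c'' j) = ∑ j, c j := by omega
  have hc''a : (∑ j, c'' j * a j) = ∑ j, c j * a j := by omega
  have hc''b : (∑ j, c'' j * b j) = ∑ j, c j * b j := by omega
  have hc''0 : cAl - 1 ≤ c'' 0 := by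
    have h00 : c'' 0 = c 0 + PE := by
      rw [hc'']
      simp [Ne.symm hi0, h0last, hPE]
    have : cAl ≤ PE := by
      rw [← hPE]
      exact Nat.le_mul_of_pos_right _ he1
    omega
  obtain ⟨c', h1', h2', h3'⟩ := moveA d a b 0 ha0 hb0 u v cA hab hsu hsv c'' hc''0 hposA
  rw [hc''sum] at h1'
  rw [hc''a] at h2'
  rw [hc''b] at h3'
  exact ⟨c', by omega, h2', h3'⟩

open MvPolynomial Pointwise

section Alg

variable {K : Type*} [Field K]

/-- exponent sets for powers -/
def ELset (r d : ℕ) (a b : Fin (r+1) → ℕ) (l : ℕ) : Set (Fin 2 →₀ ℕ) :=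
  {e | ∃ c : Fin (r+1) → ℕ, (∑ i, c i) = l ∧
    e = Finsupp.single 0 (∑ i, c i * a i) + Finsupp.single 1 (∑ i, c i * b i)}

lemma span_mono_mul (A B : Set (Fin 2 →₀ ℕ)) :
    Ideal.span ((fun e => monomial e (1:K)) '' A) * Ideal.span ((fun e => monomial e (1:K)) '' B)
      = Ideal.span ((fun e => monomial e (1:K)) '' (A + B)) := by
  rw [Ideal.span, Ideal.span, Ideal.span, Submodule.span_mul_span]
  congr 1
  ext z
  constructor
  · intro hz
    rw [Set.mem_mul] at hz
    obtain ⟨x, hx, y, hy, hxy⟩ := hz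
    obtain ⟨ex, hex, rfl⟩ := hx
    obtain ⟨ey, hey, rfl⟩ := hy
    exact ⟨ex + ey, Set.add_mem_add hex hey, by rw [← hxy, monomial_mul, one_mul]⟩
  · intro hz
    obtain ⟨e, he, rfl⟩ := hz
    rw [Set.mem_add] at he
    obtain ⟨ex, hex, ey, hey, hxy⟩ := he
    rw [Set.mem_mul]
    exact ⟨monomial ex 1, ⟨ex, hex, rfl⟩, monomial ey 1, ⟨ey, hey, rfl⟩,
      by rw [monomial_mul, one_mul, hxy]⟩

lemma sum_eq_one {n : ℕ} (c : Fin n → ℕ) (hc : (∑ i, c i) = 1) :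
    ∃ j, ∀ g : Fin n → ℕ, (∑ i, c i * g i) = g j := by
  have hne : (∑ i, c i) ≠ 0 := by omega
  obtain ⟨j, _, hj⟩ := Finset.exists_ne_zero_of_sum_ne_zero hne
  have hj1 : c j = 1 := by
    have := Finset.single_le_sum (f := c) (fun i _ => Nat.zero_le _) (Finset.mem_univ j)
    omega
  have hrest : ∀ i, c i = if i = j then 1 else 0 := by
    intro i
    by_cases h : i = j
    · subst h; simp [hj1]
    · simp only [h, if_false]
      have h2 := (Finset.add_sum_erase Finset.univ c (Finset.mem_univ j)).symm
      have h3 : ∀ k ∈ Finset.univ.erase j, c k = 0 := by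
        rw [← Finset.sum_eq_zero_iff]
        omega
      exact h3 i (Finset.mem_erase.2 ⟨h, Finset.mem_univ i⟩)
  refine ⟨j, fun g => ?_⟩
  calc (∑ i, c i * g i) = ∑ i, (if i = j then 1 else 0) * g i :=
        Finset.sum_congr rfl fun i _ => by rw [hrest i]
    _ = g j := by rw [sum_if_mul, one_mul]

lemma EL_one (r d : ℕ) (a b : Fin (r+1) → ℕ) :
    ELset r d a b 1 = Set.range (fun i => Finsupp.single 0 (a i) + Finsupp.single 1 (b i)) := by
  ext e
  constructor
  · rintro ⟨c, hc, rfl⟩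
    obtain ⟨j, hj⟩ := sum_eq_one c hc
    exact ⟨j, by rw [hj a, hj b]⟩
  · rintro ⟨j, rfl⟩
    refine ⟨fun k => if k = j then 1 else 0, by simp, ?_⟩
    rw [sum_if_mul, sum_if_mul, one_mul, one_mul]

lemma EL_add (r d : ℕ) (a b : Fin (r+1) → ℕ) (l : ℕ) :
    ELset r d a b l + ELset r d a b 1 = ELset r d a b (l+1) := by
  ext e
  constructor
  · intro he
    rw [Set.mem_add] at he
    obtain ⟨e1, ⟨c1, hc1, rfl⟩, e2, ⟨c2, hc2, rfl⟩, rfl⟩ := he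
    refine ⟨fun k => c1 k + c2 k, by rw [Finset.sum_add_distrib, hc1, hc2], ?_⟩
    simp only [add_mul, Finset.sum_add_distrib, Finsupp.single_add]
    abel
  · rintro ⟨c, hc, rfl⟩
    have hne : (∑ i, c i) ≠ 0 := by omega
    obtain ⟨j, _, hj⟩ := Finset.exists_ne_zero_of_sum_ne_zero hne
    obtain ⟨c', hc'⟩ : ∃ c' : Fin (r+1) → ℕ, c' = fun k => c k - (if k = j then 1 else 0) :=
      ⟨_, rfl⟩
    have hpt : ∀ k, c' k + (if k = j then 1 else 0) = c k + 0 := by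
      intro k
      by_cases h : k = j
      · subst h; simp [hc']; omega
      · simp [hc', h]
    have hkey : ∀ g : Fin (r+1) → ℕ, (∑ i, c' i * g i) + g j = ∑ i, c i * g i := by
      intro g
      have := sum_move c c' (fun k => if k = j then 1 else 0) (fun _ => 0) hpt g
      rw [sum_if_mul, one_mul] at this
      simpa using this
    have hcount : (∑ i, c' i) + 1 = ∑ i, c i := by
      have := hkey (fun _ => 1)
      simpa [mul_one] using this
    rw [Set.mem_add]
    refine ⟨Finsupp.single 0 (∑ i, c' i * a i) + Finsupp.single 1 (∑ i, c' i * b i),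
      ⟨c', by omega, rfl⟩,
      Finsupp.single 0 (a j) + Finsupp.single 1 (b j),
      ⟨fun k => if k = j then 1 else 0, by simp, by rw [sum_if_mul, sum_if_mul, one_mul, one_mul]⟩,
      ?_⟩
    rw [← hkey a, ← hkey b]
    simp only [Finsupp.single_add]
    abel

lemma span_pow (r d : ℕ) (a b : Fin (r+1) → ℕ) (l : ℕ) :
    (Ideal.span ((fun e => monomial e (1:K)) '' ELset r d a b 1)) ^ l
      = Ideal.span ((fun e => monomial e (1:K)) '' ELset r d a b l) := by
  induction l with
  | zero =>
    have h0 : ELset r d a b 0 = {0} := by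
      ext e
      constructor
      · rintro ⟨c, hc, rfl⟩
        have hz : ∀ i, c i = 0 := fun i => by
          have := Finset.single_le_sum (f := c) (fun i _ => Nat.zero_le _) (Finset.mem_univ i)
          omega
        have hg : ∀ g : Fin (r+1) → ℕ, (∑ i, c i * g i) = 0 :=
          fun g => Finset.sum_eq_zero (fun i _ => by rw [hz i, zero_mul])
        simp [hg a, hg b]
      · intro he
        rw [Set.mem_singleton_iff] at he
        subst he
        exact ⟨fun _ => 0, by simp, by simp⟩
    rw [pow_zero, h0, Set.image_singleton, monomial_zero', C_1, Ideal.span_singleton_one,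
      Ideal.one_eq_top]
  | succ n ih =>
    rw [pow_succ, ih, span_mono_mul, EL_add]

lemma single2_le (s t : ℕ) (e : Fin 2 →₀ ℕ) :
    Finsupp.single 0 s + Finsupp.single 1 t ≤ e ↔ s ≤ e 0 ∧ t ≤ e 1 := by
  rw [Finsupp.le_def, Fin.forall_fin_two]
  simp [Finsupp.single_apply]

lemma mem_span_EL (r d : ℕ) (a b : Fin (r+1) → ℕ) (l : ℕ) (f : MvPolynomial (Fin 2) K) :
    f ∈ Ideal.span ((fun e => monomial e (1:K)) '' ELset r d a b l) ↔
      ∀ e ∈ f.support, ∃ c : Fin (r+1) → ℕ, (∑ i, c i) = l ∧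
        (∑ i, c i * a i) ≤ e 0 ∧ (∑ i, c i * b i) ≤ e 1 := by
  rw [mem_ideal_span_monomial_image]
  apply forall₂_congr
  intro e he
  constructor
  · rintro ⟨si, ⟨c, hc, rfl⟩, hle⟩
    rw [single2_le] at hle
    exact ⟨c, hc, hle.1, hle.2⟩
  · rintro ⟨c, hc, h1, h2⟩
    exact ⟨_, ⟨c, hc, rfl⟩, (single2_le _ _ _).2 ⟨h1, h2⟩⟩

lemma mem_closure_iff_rep {n : ℕ} (a : Fin n → ℕ) (s : ℕ) :
    s ∈ AddSubmonoid.closure (Set.range a) ↔ ∃ c : Fin n → ℕ, s = ∑ i, c i * a i := by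
  constructor
  · intro hs
    refine AddSubmonoid.closure_induction (fun x hx => ?_) ⟨0, by simp⟩
      (fun x y _ _ ihx ihy => ?_) hs
    · obtain ⟨i, rfl⟩ := hx
      exact ⟨fun k => if k = i then 1 else 0, by rw [sum_if_mul, one_mul]⟩
    · obtain ⟨c1, rfl⟩ := ihx
      obtain ⟨c2, rfl⟩ := ihy
      exact ⟨fun k => c1 k + c2 k, by rw [← Finset.sum_add_distrib]; congr 1; ext i; ring⟩
  · rintro ⟨c, rfl⟩
    refine AddSubmonoid.sum_mem _ (fun i _ => ?_)
    have := nsmul_mem (AddSubmonoid.subset_closure (Set.mem_range_self i) :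
      a i ∈ AddSubmonoid.closure (Set.range a)) (c i)
    simpa [nsmul_eq_mul] using this

lemma mem_colon_span {R : Type*} [CommRing R] (J : Ideal R) (S : Set R) (f : R) :
    f ∈ J.colon (Ideal.span S) ↔ ∀ g ∈ S, f * g ∈ J := by
  rw [Submodule.mem_colon]
  constructor
  · intro h g hg
    simpa [smul_eq_mul] using h g (Ideal.subset_span hg)
  · intro h p hp
    refine Submodule.span_induction (p := fun x _ => f • x ∈ J) (fun x hx => ?_) ?_
      (fun x y _ _ ihx ihy => ?_) (fun a x _ ihx => ?_) hp
    · simpa [smul_eq_mul] using h x hx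
    · simpa using J.zero_mem
    · show f • (x + y) ∈ J
      simpa [smul_add, smul_eq_mul, mul_add] using J.add_mem ihx ihy
    · show f • (a • x) ∈ J
      have he : f • (a • x) = a * (f • x) := by
        simp only [smul_eq_mul]; ring
      rw [he]
      exact J.mul_mem_left a ihx

lemma colon_step {R : Type*} [CommRing R] (I : Ideal R) (l : ℕ) :
    (I^(l+1)).colon ((I^l : Ideal R) : Set R) ≤ (I^(l+2)).colon ((I^(l+1) : Ideal R) : Set R) := by
  intro f hf
  rw [Submodule.mem_colon] at hf ⊢
  intro p hp
  rw [SetLike.mem_coe, pow_succ] at hp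
  refine Submodule.mul_induction_on (C := fun z => f • z ∈ I^(l+2)) hp
    (fun x hx y hy => ?_) (fun x y hx hy => ?_)
  · have h1 : f * x ∈ I^(l+1) := by simpa [smul_eq_mul] using hf x hx
    have h2 := Ideal.mul_mem_mul h1 hy
    rw [← pow_succ] at h2
    simpa [smul_eq_mul, mul_assoc] using h2
  · simpa [smul_add, smul_eq_mul, mul_add] using add_mem hx hy

lemma colon_mono {R : Type*} [CommRing R] (I : Ideal R) {l l' : ℕ} (h : l ≤ l') :
    (I^(l+1)).colon ((I^l : Ideal R) : Set R) ≤ (I^(l'+1)).colon ((I^l' : Ideal R) : Set R) := by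
  induction h with
  | refl => exact le_rfl
  | step h ih => exact ih.trans (colon_step I _)

end Alg

/-- with `I = ⟨x^{a_i} y^{b_i}⟩`, `I_S = ⟨x^s y^{d−s} : s ∈ S, s ≤ d⟩`
and `I_T = ⟨x^{d−t} y^t : t ∈ T, t ≤ d⟩`, the Ratliff-Rush ideal associated to `I`
is `Ĩ = I_S ∩ I_T`. -/
theorem stmt8 {K : Type*} [Field K] {r : ℕ} (hr : 1 ≤ r) (d : ℕ)
    (a b : Fin (r + 1) → ℕ) (ha0 : a 0 = 0) (hmono : StrictMono a)
    (har : a (Fin.last r) = d) (hb : ∀ i, b i = d - a i)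
    (I IS IT : Ideal (MvPolynomial (Fin 2) K))
    (hI : I = Ideal.span (Set.range fun i => X 0 ^ a i * X 1 ^ b i))
    (hIS : IS = Ideal.span {m : MvPolynomial (Fin 2) K | ∃ s : ℕ,
        s ∈ AddSubmonoid.closure (Set.range a) ∧ s ≤ d ∧ m = X 0 ^ s * X 1 ^ (d - s)})
    (hIT : IT = Ideal.span {m : MvPolynomial (Fin 2) K | ∃ t : ℕ,
        t ∈ AddSubmonoid.closure (Set.range b) ∧ t ≤ d ∧ m = X 0 ^ (d - t) * X 1 ^ t}) :
    RRset I = ((IS ⊓ IT : Ideal (MvPolynomial (Fin 2) K)) : Set (MvPolynomial (Fin 2) K)) := by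
  classical
  have hd : ∀ i, a i ≤ d := fun i => har ▸ hmono.monotone (Fin.le_last i)
  have hab : ∀ j, a j + b j = d := fun j => by rw [hb j]; have := hd j; omega
  have hb0 : b 0 = d := by rw [hb 0, ha0]; omega
  have hblast : b (Fin.last r) = 0 := by rw [hb, har]; omega
  have hgen : ∀ (p q : ℕ), (X 0 ^ p * X 1 ^ q : MvPolynomial (Fin 2) K)
      = monomial (Finsupp.single 0 p + Finsupp.single 1 q) 1 := by
    intro p q
    rw [X_pow_eq_monomial, X_pow_eq_monomial, monomial_mul, one_mul]
  have hI1 : I = Ideal.span ((fun e => monomial e (1:K)) '' ELset r d a b 1) := by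
    rw [hI, EL_one]
    congr 1
    rw [← Set.range_comp]
    exact congrArg Set.range (funext fun i => hgen (a i) (b i))
  have hIpow : ∀ l, I ^ l = Ideal.span ((fun e => monomial e (1:K)) '' ELset r d a b l) := by
    intro l
    rw [hI1, span_pow]
  -- membership criteria for IS and IT
  have hmemIS : ∀ f : MvPolynomial (Fin 2) K, f ∈ IS ↔ ∀ e ∈ f.support, ∃ s,
      s ∈ AddSubmonoid.closure (Set.range a) ∧ s ≤ d ∧ s ≤ e 0 ∧ d - s ≤ e 1 := by
    intro f
    rw [hIS]
    have hset : {m : MvPolynomial (Fin 2) K | ∃ s : ℕ,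
        s ∈ AddSubmonoid.closure (Set.range a) ∧ s ≤ d ∧ m = X 0 ^ s * X 1 ^ (d - s)}
        = (fun e => monomial e (1:K)) '' {e | ∃ s, s ∈ AddSubmonoid.closure (Set.range a) ∧
            s ≤ d ∧ e = Finsupp.single 0 s + Finsupp.single 1 (d-s)} := by
      ext m
      constructor
      · rintro ⟨s, h1, h2, rfl⟩
        exact ⟨_, ⟨s, h1, h2, rfl⟩, (hgen s (d-s)).symm⟩
      · rintro ⟨e, ⟨s, h1, h2, rfl⟩, rfl⟩
        exact ⟨s, h1, h2, (hgen s (d-s)).symm⟩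
    rw [hset, mem_ideal_span_monomial_image]
    apply forall₂_congr
    intro e he
    constructor
    · rintro ⟨si, ⟨s, h1, h2, rfl⟩, hle⟩
      rw [single2_le] at hle
      exact ⟨s, h1, h2, hle.1, hle.2⟩
    · rintro ⟨s, h1, h2, h3, h4⟩
      exact ⟨_, ⟨s, h1, h2, rfl⟩, (single2_le _ _ _).2 ⟨h3, h4⟩⟩
  have hmemIT : ∀ f : MvPolynomial (Fin 2) K, f ∈ IT ↔ ∀ e ∈ f.support, ∃ t,
      t ∈ AddSubmonoid.closure (Set.range b) ∧ t ≤ d ∧ d - t ≤ e 0 ∧ t ≤ e 1 := by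
    intro f
    rw [hIT]
    have hset : {m : MvPolynomial (Fin 2) K | ∃ t : ℕ,
        t ∈ AddSubmonoid.closure (Set.range b) ∧ t ≤ d ∧ m = X 0 ^ (d - t) * X 1 ^ t}
        = (fun e => monomial e (1:K)) '' {e | ∃ t, t ∈ AddSubmonoid.closure (Set.range b) ∧
            t ≤ d ∧ e = Finsupp.single 0 (d-t) + Finsupp.single 1 t} := by
      ext m
      constructor
      · rintro ⟨t, h1, h2, rfl⟩
        exact ⟨_, ⟨t, h1, h2, rfl⟩, (hgen (d-t) t).symm⟩
      · rintro ⟨e, ⟨t, h1, h2, rfl⟩, rfl⟩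
        exact ⟨t, h1, h2, (hgen (d-t) t).symm⟩
    rw [hset, mem_ideal_span_monomial_image]
    apply forall₂_congr
    intro e he
    constructor
    · rintro ⟨si, ⟨t, h1, h2, rfl⟩, hle⟩
      rw [single2_le] at hle
      exact ⟨t, h1, h2, hle.1, hle.2⟩
    · rintro ⟨t, h1, h2, h3, h4⟩
      exact ⟨_, ⟨t, h1, h2, rfl⟩, (single2_le _ _ _).2 ⟨h3, h4⟩⟩
  have hRR : ∀ f : MvPolynomial (Fin 2) K, f ∈ RRset I ↔
      ∃ l, 1 ≤ l ∧ f ∈ (I^(l+1)).colon ((I^l : Ideal _) : Set (MvPolynomial (Fin 2) K)) := by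
    intro f
    simp only [RRset, Set.mem_iUnion, SetLike.mem_coe, exists_prop]
  ext f
  rw [hRR f, SetLike.mem_coe, Submodule.mem_inf]
  constructor
  · rintro ⟨l, hl, hcol⟩
    rw [Submodule.mem_colon] at hcol
    constructor
    · rw [hmemIS f]
      intro e he
      have hP : (monomial (Finsupp.single 1 (l*d)) 1 : MvPolynomial (Fin 2) K) ∈ I ^ l := by
        rw [hIpow l, mem_span_EL]
        intro e' he'
        rw [support_monomial, if_neg (one_ne_zero (α := K)), Finset.mem_singleton] at he'
        refine ⟨fun k => if k = 0 then l else 0, by simp, ?_, ?_⟩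
        · rw [sum_if_mul, ha0, mul_zero]
          exact Nat.zero_le _
        · rw [sum_if_mul, hb0, he']
          simp
      have hfP := hcol _ hP
      rw [smul_eq_mul, hIpow (l+1), mem_span_EL] at hfP
      have hesupp : e + Finsupp.single 1 (l*d) ∈
          (f * monomial (Finsupp.single 1 (l*d)) 1).support := by
        rw [mem_support_iff, coeff_mul_monomial]
        simpa using mem_support_iff.1 he
      obtain ⟨c, hc, hca, hcb⟩ := hfP _ hesupp
      have h0 : (e + Finsupp.single 1 (l*d) : Fin 2 →₀ ℕ) 0 = e 0 := by
        simp [Finsupp.single_apply]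
      have h1 : (e + Finsupp.single 1 (l*d) : Fin 2 →₀ ℕ) 1 = e 1 + l*d := by
        simp
      rw [h0] at hca
      rw [h1] at hcb
      have hst := sum_ab d a b hab c
      rw [hc] at hst
      have hld : (l+1) * d = l*d + d := by ring
      rw [hld] at hst
      by_cases hsd : (∑ i, c i * a i) ≤ d
      · refine ⟨∑ i, c i * a i, (mem_closure_iff_rep a _).2 ⟨c, rfl⟩, hsd, hca, ?_⟩
        generalize hQ : l * d = Q at hst hcb
        omega
      · refine ⟨d, har ▸ AddSubmonoid.subset_closure (Set.mem_range_self (Fin.last r)),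
          le_rfl, by omega, by omega⟩
    · rw [hmemIT f]
      intro e he
      have hP : (monomial (Finsupp.single 0 (l*d)) 1 : MvPolynomial (Fin 2) K) ∈ I ^ l := by
        rw [hIpow l, mem_span_EL]
        intro e' he'
        rw [support_monomial, if_neg (one_ne_zero (α := K)), Finset.mem_singleton] at he'
        refine ⟨fun k => if k = Fin.last r then l else 0, by simp, ?_, ?_⟩
        · rw [sum_if_mul, har, he']
          simp
        · rw [sum_if_mul, hblast, mul_zero]
          exact Nat.zero_le _
      have hfP := hcol _ hP
      rw [smul_eq_mul, hIpow (l+1), mem_span_EL] at hfP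
      have hesupp : e + Finsupp.single 0 (l*d) ∈
          (f * monomial (Finsupp.single 0 (l*d)) 1).support := by
        rw [mem_support_iff, coeff_mul_monomial]
        simpa using mem_support_iff.1 he
      obtain ⟨c, hc, hca, hcb⟩ := hfP _ hesupp
      have h0 : (e + Finsupp.single 0 (l*d) : Fin 2 →₀ ℕ) 0 = e 0 + l*d := by
        simp
      have h1 : (e + Finsupp.single 0 (l*d) : Fin 2 →₀ ℕ) 1 = e 1 := by
        simp [Finsupp.single_apply]
      rw [h0] at hca
      rw [h1] at hcb
      have hst := sum_ab d a b hab c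
      rw [hc] at hst
      have hld : (l+1) * d = l*d + d := by ring
      rw [hld] at hst
      by_cases htd : (∑ i, c i * b i) ≤ d
      · refine ⟨∑ i, c i * b i, (mem_closure_iff_rep b _).2 ⟨c, rfl⟩, htd, ?_, hcb⟩
        generalize hQ : l * d = Q at hst hca
        omega
      · refine ⟨d, hb0 ▸ AddSubmonoid.subset_closure (Set.mem_range_self 0),
          le_rfl, by omega, by omega⟩
  · rintro ⟨hf1, hf2⟩
    rw [hmemIS f] at hf1
    rw [hmemIT f] at hf2
    have hper : ∀ e : Fin 2 →₀ ℕ, ∃ l, 1 ≤ l ∧ (e ∈ f.support →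
        (monomial e (1:K)) ∈ (I^(l+1)).colon ((I^l : Ideal _) : Set (MvPolynomial (Fin 2) K))) := by
      intro e
      by_cases he : e ∈ f.support
      · obtain ⟨s, hs1, hs2, hs3, hs4⟩ := hf1 e he
        obtain ⟨t, ht1, ht2, ht3, ht4⟩ := hf2 e he
        obtain ⟨cA, rfl⟩ := (mem_closure_iff_rep a s).1 hs1
        obtain ⟨cB, rfl⟩ := (mem_closure_iff_rep b t).1 ht1
        obtain ⟨l, hl1, hl2⟩ := key hr d a b ha0 hmono har hb (e 0) (e 1)
          cA hs3 (by omega) cB ht4 (by omega)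
        refine ⟨l, hl1, fun _ => ?_⟩
        rw [hIpow l, mem_colon_span]
        rintro g ⟨ec, ⟨c, hc, rfl⟩, rfl⟩
        rw [monomial_mul, one_mul, hIpow (l+1), mem_span_EL]
        intro e' he'
        rw [support_monomial, if_neg (one_ne_zero (α := K)), Finset.mem_singleton] at he'
        obtain ⟨c', h1, h2, h3⟩ := hl2 c hc
        have h0c : e' 0 = e 0 + (∑ i, c i * a i) := by
          rw [he']
          simp [Finsupp.single_apply]
        have h1c : e' 1 = e 1 + (∑ i, c i * b i) := by
          rw [he']
          simp [Finsupp.single_apply]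
        exact ⟨c', h1, by omega, by omega⟩
      · exact ⟨1, le_rfl, fun h => absurd h he⟩
    choose lfun hlf1 hlf2 using hper
    refine ⟨f.support.sup lfun + 1, by omega, ?_⟩
    have hsum : (∑ e ∈ f.support, monomial e (coeff e f)) ∈
        (I^(f.support.sup lfun + 1 + 1)).colon ((I^(f.support.sup lfun + 1) : Ideal _) : Set (MvPolynomial (Fin 2) K)) := by
      refine Submodule.sum_mem _ (fun e he => ?_)
      have hmono1 : monomial e (coeff e f) = C (coeff e f) * monomial e 1 := by
        rw [C_mul_monomial, mul_one]
      rw [hmono1]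
      exact Ideal.mul_mem_left _ _
        (colon_mono I (by exact le_trans (Finset.le_sup he) (Nat.le_succ _)) (hlf2 e he))
    rwa [support_sum_monomial_coeff] at hsum
end

section
/- Let k be a field and R = k[x,y]. Fix integers 0 = a_0 < a_1 < ⋯ < a_r = d (r ≥ 1), set b_i = d − a_i, and let I = ⟨x^{a_0}y^{b_0}, …, x^{a_r}y^{b_r}⟩ ⊆ R. If for every pair of indices 0 ≤ i, j ≤ r either a_i + a_j = a_k for some 0 ≤ k ≤ r, or a_i + a_j ≥ d, then I is Ratliff-Rush, i.e., ⋃_{l ≥ 1} (I^{l+1} : I^l) = I. -/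
open MvPolynomial Pointwise

/-- support of `f * monomial t 1`. -/
lemma support_mul_monomial_one {K : Type*} [Field K] (t : Fin 2 →₀ ℕ)
    (f : MvPolynomial (Fin 2) K) :
    (f * monomial t 1).support = f.support.map (addRightEmbedding t) :=
  AddMonoidAlgebra.support_coeff_mul_single f _ (by simp) _

/-- products of monomial-generated span sets -/
lemma image_monomial_mul {K : Type*} [Field K] (A B : Set (Fin 2 →₀ ℕ)) :
    ((fun s => monomial s (1 : K)) '' A) * ((fun s => monomial s (1 : K)) '' B)
    = ((fun s => monomial s (1 : K)) '' (A + B)) := by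
  rw [← Set.image2_mul, Set.image2_image_left, Set.image2_image_right,
      ← Set.image2_add, Set.image_image2]
  apply Set.image2_congr
  intro x _ y _
  rw [monomial_mul, one_mul]

/-- with `I = ⟨x^{a_i} y^{b_i}⟩ ⊆ k[x,y]`, `0 = a_0 < ⋯ < a_r = d`,
`b_i = d − a_i`: if for every pair `i, j` either `a_i + a_j = a_k` for some `k`
or `a_i + a_j ≥ d`, then `I` is Ratliff-Rush. -/
theorem stmt9 {K : Type*} [Field K] {r : ℕ} (hr : 1 ≤ r) (d : ℕ)
    (a b : Fin (r + 1) → ℕ) (ha0 : a 0 = 0) (hmono : StrictMono a)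
    (har : a (Fin.last r) = d) (hb : ∀ i, b i = d - a i)
    (hcond : ∀ i j : Fin (r + 1), (∃ k : Fin (r + 1), a i + a j = a k) ∨ d ≤ a i + a j)
    (I : Ideal (MvPolynomial (Fin 2) K))
    (hI : I = Ideal.span (Set.range fun i => X 0 ^ a i * X 1 ^ b i)) :
    RRset I = (I : Set (MvPolynomial (Fin 2) K)) := by
  classical
  have had : ∀ i, a i ≤ d := fun i => har ▸ hmono.monotone (Fin.le_last i)
  -- exponent vectors of the generators
  set mexp : Fin (r + 1) → (Fin 2 →₀ ℕ) :=
    fun i => Finsupp.single 0 (a i) + Finsupp.single 1 (b i) with hmexp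
  have hmexp0 : ∀ i, mexp i 0 = a i := by
    intro i; simp [hmexp, Finsupp.single_apply]
  have hmexp1 : ∀ i, mexp i 1 = b i := by
    intro i; simp [hmexp, Finsupp.single_apply]
  have hgen : ∀ i, (X 0 ^ a i * X 1 ^ b i : MvPolynomial (Fin 2) K)
      = monomial (mexp i) 1 := by
    intro i
    rw [X_pow_eq_monomial, X_pow_eq_monomial, monomial_mul, one_mul]
  have hIspan : I = Ideal.span ((fun s => monomial s (1 : K)) '' Set.range mexp) := by
    rw [hI, ← Set.range_comp]
    exact congrArg Ideal.span (congrArg Set.range (funext hgen))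
  -- exponent sets of the powers
  set Pn : ℕ → Set (Fin 2 →₀ ℕ) :=
    fun n => Set.range (fun c : Fin n → Fin (r + 1) => ∑ t, mexp (c t)) with hPn
  have hPnsucc : ∀ n, Pn (n + 1) = Pn n + Set.range mexp := by
    intro n
    ext s
    simp only [hPn, Set.mem_add, Set.mem_range]
    constructor
    · rintro ⟨c, rfl⟩
      refine ⟨∑ t : Fin n, mexp (c t.castSucc), ⟨fun t : Fin n => c t.castSucc, rfl⟩,
        mexp (c (Fin.last n)), ⟨c (Fin.last n), rfl⟩, ?_⟩
      exact (Fin.sum_univ_castSucc fun t => mexp (c t)).symm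
    · rintro ⟨s1, ⟨c, rfl⟩, s2, ⟨i, rfl⟩, rfl⟩
      refine ⟨Fin.snoc c i, ?_⟩
      rw [Fin.sum_univ_castSucc]
      simp
  have hPow : ∀ n, I ^ n = Ideal.span ((fun s => monomial s (1 : K)) '' Pn n) := by
    intro n
    induction n with
    | zero =>
      rw [pow_zero]
      have h0 : ((fun s => monomial s (1 : K)) '' Pn 0) = {1} := by
        ext z
        simp only [hPn, Set.mem_image, Set.mem_range, Set.mem_singleton_iff]
        constructor
        · rintro ⟨s, ⟨c, rfl⟩, rfl⟩
          simp
        · rintro rfl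
          exact ⟨0, ⟨fun t => 0, by simp⟩, by simp⟩
      rw [h0, Ideal.span_singleton_one, Ideal.one_eq_top]
    | succ n ih =>
      rw [pow_succ, ih, hIspan, Ideal.span_mul_span', image_monomial_mul, hPnsucc]
  have hMem : ∀ (n : ℕ) (f : MvPolynomial (Fin 2) K),
      f ∈ I ^ n ↔ ∀ m ∈ f.support, ∃ s ∈ Pn n, s ≤ m := by
    intro n f
    rw [hPow n, mem_ideal_span_monomial_image]
  -- sums of a's below d are a's
  have hclose : ∀ (n : ℕ) (c : Fin n → Fin (r + 1)),
      (∑ t, a (c t)) < d → ∃ k, (∑ t, a (c t)) = a k := by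
    intro n
    induction n with
    | zero => intro c _; exact ⟨0, by simp [ha0]⟩
    | succ n ih =>
      intro c hlt
      rw [Fin.sum_univ_succ] at hlt ⊢
      obtain ⟨k', hk'⟩ := ih (fun t => c t.succ) (lt_of_le_of_lt (Nat.le_add_left _ _) hlt)
      rw [hk'] at hlt ⊢
      rcases hcond (c 0) k' with ⟨k, hk⟩ | hge
      · exact ⟨k, hk⟩
      · omega
  -- component computations for elements of Pn
  have hcomp : ∀ (n : ℕ) (c : Fin n → Fin (r + 1)),
      (∑ t, mexp (c t)) 0 = ∑ t, a (c t) ∧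
      (∑ t, mexp (c t)) 0 + (∑ t, mexp (c t)) 1 = n * d := by
    intro n c
    have h0 : (∑ t, mexp (c t)) 0 = ∑ t, a (c t) := by
      rw [Finsupp.finset_sum_apply]
      exact Finset.sum_congr rfl fun t _ => hmexp0 _
    have h1 : (∑ t, mexp (c t)) 1 = ∑ t, b (c t) := by
      rw [Finsupp.finset_sum_apply]
      exact Finset.sum_congr rfl fun t _ => hmexp1 _
    refine ⟨h0, ?_⟩
    rw [h0, h1, ← Finset.sum_add_distrib]
    have hd : ∀ t : Fin n, a (c t) + b (c t) = d := by
      intro t; have := had (c t); rw [hb]; omega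
    rw [Finset.sum_congr rfl fun t _ => hd t]
    simp [Finset.sum_const, mul_comm]
  -- the generator y^d
  have hyd : (X 1 ^ d : MvPolynomial (Fin 2) K) ∈ I := by
    have h : (X 1 ^ d : MvPolynomial (Fin 2) K) = X 0 ^ a 0 * X 1 ^ b 0 := by
      rw [ha0, hb 0, ha0, Nat.sub_zero, pow_zero, one_mul]
    rw [h, hI]
    exact Ideal.subset_span ⟨0, rfl⟩
  ext f
  simp only [RRset, Set.mem_iUnion, SetLike.mem_coe]
  constructor
  · rintro ⟨l, hl, hf⟩
    rw [Submodule.mem_colon] at hf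
    -- f * y^(d*l) ∈ I^(l+1)
    have hyl : (X 1 ^ d : MvPolynomial (Fin 2) K) ^ l ∈ I ^ l :=
      Ideal.pow_mem_pow hyd l
    have hg : f * monomial (Finsupp.single 1 (d * l)) 1 ∈ I ^ (l + 1) := by
      have hfy := hf _ hyl
      rwa [smul_eq_mul, ← pow_mul, X_pow_eq_monomial] at hfy
    rw [show I = I ^ 1 by rw [pow_one], hMem 1]
    intro m hm
    suffices h : ∃ i, mexp i ≤ m by
      obtain ⟨i, hi⟩ := h
      exact ⟨mexp i, ⟨fun _ => i, by simp⟩, hi⟩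
    by_cases hud : d ≤ m 0
    · refine ⟨Fin.last r, ?_⟩
      rw [Finsupp.le_def, Fin.forall_fin_two]
      constructor
      · rw [hmexp0, har]; exact hud
      · rw [hmexp1, hb, har]; simp
    · -- m + (0, d*l) is in the support of g
      have hm' : m + Finsupp.single 1 (d * l)
          ∈ (f * monomial (Finsupp.single 1 (d * l)) 1).support := by
        rw [support_mul_monomial_one]
        exact Finset.mem_map_of_mem _ hm
      obtain ⟨s, hsPn, hsle⟩ := (hMem (l + 1) _).1 hg _ hm'
      simp only [hPn, Set.mem_range] at hsPn
      obtain ⟨c, rfl⟩ := hsPn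
      obtain ⟨h0, hsum⟩ := hcomp (l + 1) c
      rw [Finsupp.le_def] at hsle
      have hle0 : (∑ t, mexp (c t)) 0 ≤ m 0 := by
        have h := hsle 0
        rwa [Finsupp.add_apply, Finsupp.single_eq_of_ne (by decide), add_zero] at h
      have hle1 : (∑ t, mexp (c t)) 1 ≤ m 1 + d * l := by
        have h := hsle 1
        rwa [Finsupp.add_apply, Finsupp.single_eq_same] at h
      -- the x-exponent of s is < d, hence equals some a k
      have hlt : (∑ t, a (c t)) < d := by omega
      obtain ⟨k, hk⟩ := hclose (l + 1) c hlt
      have hak : a k ≤ d := had k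
      have hld : (l + 1) * d = d * l + d := by ring
      refine ⟨k, ?_⟩
      rw [Finsupp.le_def, Fin.forall_fin_two]
      constructor
      · rw [hmexp0]; omega
      · rw [hmexp1, hb]; omega
  · intro hf
    refine ⟨1, le_refl 1, ?_⟩
    rw [Submodule.mem_colon]
    intro p hp
    rw [pow_one] at hp
    rw [smul_eq_mul, pow_succ, pow_one]
    exact Ideal.mul_mem_mul hf hp
end

section
/- Let k be a field and R = k[x,y]. Let 0 = a_0 < a_1 < ⋯ < a_r and b_0 > b_1 > ⋯ > b_r = 0 be integers satisfying b_0·a_i + a_r·b_i = a_r·b_0 for all i, let I = ⟨x^{a_0}y^{b_0}, …, x^{a_r}y^{b_r}⟩ ⊆ R, and let S = ⟨a_0, …, a_r⟩ and T = ⟨b_0, …, b_r⟩ be the numerical semigroups generated by the exponents. Then there exists an integer L such that for every l ≥ L: I^l equals the ideal generated by all monomials x^s y^t with s ∈ S, t ∈ T, and b_0·s + a_r·t = a_r·b_0·l; moreover (1) if s ∈ S and u ∈ ℕ satisfy b_0·s ≤ a_r·u and b_0·s + a_r·u ≥ a_r·b_0·l, then x^s y^u ∈ I^l, and (2) if t ∈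 T and v ∈ ℕ satisfy a_r·t ≤ b_0·v and a_r·t + b_0·v ≥ a_r·b_0·l, then x^v y^t ∈ I^l. -/
/-!
All generators `x^{aᵢ} y^{bᵢ}` lie on the segment `b₀ s + a_r t = a_r b₀`, so products of `l` of
them lie on its `l`-fold dilate; this gives `I^l ⊆ ⟨x^s y^t⟩` for every `l`. Conversely, take
`s ∈ S` and `(s, u)` on or above the dilated line with `b₀ s ≤ a_r u`. If `s ≥ a_r l / 2`, a power
of `x^{a_r}` times a power of `y^{b₀}` already divides `x^s y^u`. Otherwise, reducing the
coefficients of `s = ∑ cᵢ aᵢ` modulo `a_r` and absorbing the rest into `x^{a_r}` writes `x^s y^t`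
as a product of at most `a_r (r + 1) + s / a_r ≤ l` generators, and powers of `y^{b₀}` supply the
missing factors. Part (2) is part (1) with `x` and `y` exchanged, and the two together give the
reverse inclusion.
-/

open MvPolynomial

section

variable {R : Type*} [CommSemiring R] (x y : R)

theorem pow_mul_pow_mem_of_le {J : Ideal R} {s₀ t₀ s t : ℕ} (h : x ^ s₀ * y ^ t₀ ∈ J)
    (hs : s₀ ≤ s) (ht : t₀ ≤ t) : x ^ s * y ^ t ∈ J := by
  obtain ⟨s', rfl⟩ := Nat.exists_eq_add_of_le hs
  obtain ⟨t', rfl⟩ := Nat.exists_eq_add_of_le ht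
  rw [show x ^ (s₀ + s') * y ^ (t₀ + t') = x ^ s₀ * y ^ t₀ * (x ^ s' * y ^ t') by ring]
  exact J.mul_mem_right _ h

variable {ι : Type*} {a b : ι → ℕ}

open Pointwise in
theorem span_pow_le_span_monomials_on_line {A B : ℕ} (hline : ∀ i, B * a i + A * b i = A * B)
    (l : ℕ) :
    Ideal.span (Set.range fun i => x ^ a i * y ^ b i) ^ l ≤
      Ideal.span {m : R | ∃ s t : ℕ, s ∈ AddSubmonoid.closure (Set.range a) ∧
        t ∈ AddSubmonoid.closure (Set.range b) ∧ B * s + A * t = A * B * l ∧ m = x ^ s * y ^ t} := by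
  induction l with
  | zero =>
    rw [pow_zero, Ideal.one_eq_top, top_le_iff, Ideal.eq_top_iff_one]
    exact Ideal.subset_span ⟨0, 0, zero_mem _, zero_mem _, by simp, by simp⟩
  | succ l ih =>
    rw [pow_succ]
    refine (Ideal.mul_mono_left ih).trans ?_
    rw [Ideal.span_mul_span']
    refine Ideal.span_mono ?_
    rintro _ ⟨_, ⟨s, t, hs, ht, hst, rfl⟩, _, ⟨i, rfl⟩, rfl⟩
    refine ⟨s + a i, t + b i, add_mem hs (AddSubmonoid.subset_closure ⟨i, rfl⟩),
      add_mem ht (AddSubmonoid.subset_closure ⟨i, rfl⟩), ?_, by ring⟩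
    linear_combination hst + hline i

variable [Fintype ι] {I : Ideal R}

theorem pow_sum_mul_pow_sum_mem_pow (hgen : ∀ i, x ^ a i * y ^ b i ∈ I) (c : ι → ℕ) :
    x ^ (∑ i, c i * a i) * y ^ (∑ i, c i * b i) ∈ I ^ (∑ i, c i) := by
  have hprod : x ^ (∑ i, c i * a i) * y ^ (∑ i, c i * b i) = ∏ i, (x ^ a i * y ^ b i) ^ c i := by
    simp only [mul_pow, Finset.prod_mul_distrib, ← pow_mul, Finset.prod_pow_eq_pow_sum, mul_comm]
  rw [hprod, ← Finset.prod_pow_eq_pow_sum]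
  exact Ideal.prod_mem_prod fun i _ => Ideal.pow_mem_pow (hgen i) _

theorem sum_mul_add_mul_sum_mul {A B : ℕ} (hline : ∀ i, B * a i + A * b i = A * B)
    (c : ι → ℕ) : B * ∑ i, c i * a i + A * ∑ i, c i * b i = A * B * ∑ i, c i := by
  simp only [Finset.mul_sum, ← Finset.sum_add_distrib]
  refine Finset.sum_congr rfl fun i _ => ?_
  linear_combination c i * hline i

theorem exists_sum_mul_add_mul_eq {A s : ℕ} (hA : 0 < A)
    (hs : s ∈ AddSubmonoid.closure (Set.range a)) :
    ∃ (c : ι → ℕ) (m : ℕ), (∀ i, c i < A) ∧ ∑ i, c i * a i + A * m = s := by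
  obtain ⟨n, rfl⟩ := AddSubmonoid.mem_closure_range_iff_of_fintype.1 hs
  refine ⟨fun i => n i % A, ∑ i, n i / A * a i, fun i => Nat.mod_lt _ hA, ?_⟩
  rw [Finset.mul_sum, ← Finset.sum_add_distrib]
  refine Finset.sum_congr rfl fun i _ => ?_
  conv_rhs => rw [smul_eq_mul, ← Nat.mod_add_div (n i) A]
  ring

theorem pow_mul_pow_mem_pow_of_weight {A B n l s t u : ℕ} (hA : 0 < A) (hyB : y ^ B ∈ I)
    (h : x ^ s * y ^ t ∈ I ^ n) (hw : B * s + A * t = A * B * n) (hnl : n ≤ l)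
    (hu : A * B * l ≤ B * s + A * u) : x ^ s * y ^ u ∈ I ^ l := by
  obtain ⟨d, rfl⟩ := Nat.exists_eq_add_of_le hnl
  have hmem : x ^ s * y ^ (t + B * d) ∈ I ^ (n + d) := by
    rw [pow_add y, pow_mul, ← mul_assoc, pow_add]
    exact Ideal.mul_mem_mul h (Ideal.pow_mem_pow hyB d)
  refine pow_mul_pow_mem_of_le x y hmem le_rfl (Nat.le_of_mul_le_mul_left ?_ hA)
  linarith

theorem pow_mul_pow_mem_pow {A B : ℕ} (hA : 0 < A) (hxA : x ^ A ∈ I) (hyB : y ^ B ∈ I)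
    (hgen : ∀ i, x ^ a i * y ^ b i ∈ I) (hline : ∀ i, B * a i + A * b i = A * B)
    {l s u : ℕ} (hl : 2 * A * Fintype.card ι < l)
    (hs : s ∈ AddSubmonoid.closure (Set.range a)) (hsu : B * s ≤ A * u)
    (hlsu : A * B * l ≤ B * s + A * u) : x ^ s * y ^ u ∈ I ^ l := by
  rcases le_or_gt l (2 * (s / A)) with hq | hq
  · set p := min (s / A) l
    have hAp : A * p ≤ s := (Nat.mul_le_mul_left A (min_le_left _ _)).trans (Nat.mul_div_le s A)
    have hlp : l ≤ 2 * p := by omega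
    have hxp : x ^ (A * p) * y ^ 0 ∈ I ^ p := by
      simpa [pow_mul] using Ideal.pow_mem_pow hxA p
    refine pow_mul_pow_mem_of_le x y
      (pow_mul_pow_mem_pow_of_weight x y hA hyB hxp (by ring) (min_le_right _ _) ?_) hAp le_rfl
    linarith [Nat.mul_le_mul_left (A * B) hlp, Nat.mul_le_mul_left B hAp]
  · obtain ⟨c, m, hcA, hcs⟩ := exists_sum_mul_add_mul_eq (a := a) hA hs
    have hmem : x ^ s * y ^ (∑ i, c i * b i) ∈ I ^ (∑ i, c i + m) := by
      rw [← hcs, pow_add, pow_add, pow_mul]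
      rw [show x ^ (∑ i, c i * a i) * (x ^ A) ^ m * y ^ (∑ i, c i * b i) =
        x ^ (∑ i, c i * a i) * y ^ (∑ i, c i * b i) * (x ^ A) ^ m by ring]
      exact Ideal.mul_mem_mul (pow_sum_mul_pow_sum_mem_pow x y hgen c) (Ideal.pow_mem_pow hxA m)
    have hcard : ∑ i, c i ≤ Fintype.card ι * A := by
      simpa using Finset.sum_le_sum fun i (_ : i ∈ Finset.univ) => (hcA i).le
    have hn : ∑ i, c i + m ≤ l := by
      have hAm : A * m ≤ s := le_of_add_le_right hcs.le
      have hs2 : s < A * (s / A + 1) := Nat.lt_mul_div_succ s hA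
      have h1 := Nat.mul_le_mul_left A hcard
      have h2 := Nat.mul_le_mul_left A (show 2 * (s / A + 1) ≤ l + 1 by omega)
      have h3 := Nat.mul_le_mul_left A (show 2 * A * Fintype.card ι + 1 ≤ l by omega)
      refine Nat.le_of_mul_le_mul_left ?_ hA
      linarith
    exact pow_mul_pow_mem_pow_of_weight x y hA hyB hmem (by rw [← hcs]; linear_combination sum_mul_add_mul_sum_mul hline c)
      hn hlsu

end

/-- with `0 = a_0 < ⋯ < a_r`, `b_0 > ⋯ > b_r = 0` satisfying
`b_0·a_i + a_r·b_i = a_r·b_0`, `I = ⟨x^{a_i} y^{b_i}⟩ ⊆ k[x,y]`, `S = ⟨a_i⟩`,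
`T = ⟨b_i⟩`, there exists `L` such that for all `l ≥ L`:
`I^l = ⟨x^s y^t : s ∈ S, t ∈ T, s/a_r + t/b_0 = l⟩`; moreover
(1) if `s ∈ S`, `s/a_r ≤ u/b_0` and `s/a_r + u/b_0 ≥ l`, then `x^s y^u ∈ I^l`;
(2) if `t ∈ T`, `t/b_0 ≤ v/a_r` and `t/b_0 + v/a_r ≥ l`, then `x^v y^t ∈ I^l`
(all fractional conditions cleared of denominators). -/
theorem stmt12 {K : Type*} [Field K] {r : ℕ} (hr : 1 ≤ r) (a b : Fin (r + 1) → ℕ)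
    (ha0 : a 0 = 0) (hamono : StrictMono a)
    (hbr : b (Fin.last r) = 0) (hbanti : StrictAnti b)
    (hcond : ∀ i, b 0 * a i + a (Fin.last r) * b i = a (Fin.last r) * b 0)
    (I : Ideal (MvPolynomial (Fin 2) K))
    (hI : I = Ideal.span (Set.range fun i => X 0 ^ a i * X 1 ^ b i)) :
    ∃ L : ℕ, ∀ l : ℕ, L ≤ l →
      (I ^ l = Ideal.span {m : MvPolynomial (Fin 2) K | ∃ s t : ℕ,
          s ∈ AddSubmonoid.closure (Set.range a) ∧
          t ∈ AddSubmonoid.closure (Set.range b) ∧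
          b 0 * s + a (Fin.last r) * t = a (Fin.last r) * b 0 * l ∧
          m = X 0 ^ s * X 1 ^ t}) ∧
      (∀ s u : ℕ, s ∈ AddSubmonoid.closure (Set.range a) →
        b 0 * s ≤ a (Fin.last r) * u →
        a (Fin.last r) * b 0 * l ≤ b 0 * s + a (Fin.last r) * u →
        X 0 ^ s * X 1 ^ u ∈ I ^ l) ∧
      (∀ t v : ℕ, t ∈ AddSubmonoid.closure (Set.range b) →
        a (Fin.last r) * t ≤ b 0 * v →
        a (Fin.last r) * b 0 * l ≤ a (Fin.last r) * t + b 0 * v →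
        X 0 ^ v * X 1 ^ t ∈ I ^ l) := by
  set A := a (Fin.last r)
  set B := b 0
  have hlast : (0 : Fin (r + 1)) < Fin.last r := by
    rw [Fin.lt_def, Fin.val_zero, Fin.val_last]; omega
  have hA : 0 < A := (Nat.zero_le _).trans_lt (hamono hlast)
  have hB : 0 < B := (Nat.zero_le _).trans_lt (hbanti hlast)
  have hgen : ∀ i, X 0 ^ a i * X 1 ^ b i ∈ I := fun i => hI ▸ Ideal.subset_span ⟨i, rfl⟩
  have hxA : X 0 ^ A ∈ I := by simpa [hbr] using hgen (Fin.last r)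
  have hyB : X 1 ^ B ∈ I := by simpa [ha0] using hgen 0
  refine ⟨2 * (A + B) * (r + 1) + 1, fun l hl => ?_⟩
  have part1 : ∀ s u, s ∈ AddSubmonoid.closure (Set.range a) → B * s ≤ A * u →
      A * B * l ≤ B * s + A * u → X 0 ^ s * X 1 ^ u ∈ I ^ l :=
    fun s u => pow_mul_pow_mem_pow _ _ hA hxA hyB hgen hcond (by rw [Fintype.card_fin]; nlinarith)
  have part2 : ∀ t v, t ∈ AddSubmonoid.closure (Set.range b) → A * t ≤ B * v →
      A * B * l ≤ A * t + B * v → X 0 ^ v * X 1 ^ t ∈ I ^ l := by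
    intro t v ht htv hltv
    rw [mul_comm]
    exact pow_mul_pow_mem_pow _ _ hB hyB hxA (fun i => by rw [mul_comm]; exact hgen i)
      (fun i => by linarith [hcond i]) (by rw [Fintype.card_fin]; nlinarith) ht htv (by linarith)
  refine ⟨le_antisymm (hI ▸ span_pow_le_span_monomials_on_line _ _ hcond l) ?_, part1, part2⟩
  rw [Ideal.span_le]
  rintro _ ⟨s, t, hs, ht, hst, rfl⟩
  rcases le_total (B * s) (A * t) with h | h
  · exact part1 s t hs h hst.ge
  · exact part2 t s ht h (by linarith)
end
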